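/- arXiv:2301.08683 — 7 statements merged into one kernel-verified Lean document; each statement's English description precedes it below -/
import Mathlib

section
/- Let G be a finite group with a metacyclic factorization G = A·B, where A is a normal cyclic subgroup and B a cyclic subgroup. Then for every set of primes μ, the product of the Hall μ-parts A_μ · B_μ is a Hall μ-subgroup of G. -/
/-- `n` is a `π`-number: every prime divisor of `n` lies in `π`. -/
def IsPiNumber (π : Set ℕ) (n : ℕ) : Prop := ∀ p : ℕ, p.Prime → p ∣ n → p ∈ π

/-- `H` is a Hall `π`-subgroup: its order is a `π`-number and its index is a `π'`-number. -/
def IsHallSubgroup {G : Type*} [Group G] (π : Set ℕ) (H : Subgroup G) : Prop :=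
  IsPiNumber π (Nat.card H) ∧ IsPiNumber {p : ℕ | p ∉ π} H.index

open scoped Classical in
/-- The `μ`-part of `n`. -/
noncomputable def piPart (μ : Set ℕ) (n : ℕ) : ℕ :=
  n.factorization.prod fun p k => if p ∈ μ then p ^ k else 1

open scoped Classical in
noncomputable def coPiPart (μ : Set ℕ) (n : ℕ) : ℕ :=
  n.factorization.prod fun p k => if p ∈ μ then 1 else p ^ k

open scoped Classical in
lemma piPart_mul_coPiPart (μ : Set ℕ) {n : ℕ} (hn : n ≠ 0) :
    piPart μ n * coPiPart μ n = n := by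
  unfold piPart coPiPart Finsupp.prod
  rw [← Finset.prod_mul_distrib]
  conv_rhs => rw [← Nat.factorization_prod_pow_eq_self hn]
  unfold Finsupp.prod
  refine Finset.prod_congr rfl fun p _ => ?_
  by_cases h : p ∈ μ <;> simp [h]

open scoped Classical in
lemma isPiNumber_piPart (μ : Set ℕ) (n : ℕ) : IsPiNumber μ (piPart μ n) := by
  intro p hp hdvd
  unfold piPart Finsupp.prod at hdvd
  obtain ⟨q, hq, hdq⟩ := hp.prime.exists_mem_finset_dvd hdvd
  by_cases h : q ∈ μ
  · simp only [h, if_true] at hdq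
    rcases (Nat.Prime.dvd_of_dvd_pow hp hdq) with hq'
    have hqp : q.Prime := Nat.prime_of_mem_primeFactors (by simpa using hq)
    rwa [(Nat.prime_dvd_prime_iff_eq hp hqp).mp hq']
  · simp only [h, if_false] at hdq
    exact absurd (Nat.le_of_dvd one_pos hdq) hp.one_lt.not_ge

open scoped Classical in
lemma isPiNumber_coPiPart (μ : Set ℕ) (n : ℕ) :
    IsPiNumber {p : ℕ | p ∉ μ} (coPiPart μ n) := by
  intro p hp hdvd
  unfold coPiPart Finsupp.prod at hdvd
  obtain ⟨q, hq, hdq⟩ := hp.prime.exists_mem_finset_dvd hdvd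
  by_cases h : q ∈ μ
  · simp only [h, if_true] at hdq
    exact absurd (Nat.le_of_dvd one_pos hdq) hp.one_lt.not_ge
  · simp only [h, if_false] at hdq
    rcases (Nat.Prime.dvd_of_dvd_pow hp hdq) with hq'
    have hqp : q.Prime := Nat.prime_of_mem_primeFactors (by simpa using hq)
    rw [(Nat.prime_dvd_prime_iff_eq hp hqp).mp hq']
    exact h

lemma piPart_dvd (μ : Set ℕ) (n : ℕ) : piPart μ n ∣ n := by
  rcases eq_or_ne n 0 with rfl | hn
  · exact dvd_zero _
  · exact ⟨_, (piPart_mul_coPiPart μ hn).symm⟩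

lemma piPart_ne_zero (μ : Set ℕ) {n : ℕ} (hn : n ≠ 0) : piPart μ n ≠ 0 := by
  intro h
  have := piPart_mul_coPiPart μ hn
  rw [h, zero_mul] at this
  exact hn this.symm

/-- For `p ∈ μ`, the `p`-adic valuation of `piPart μ n` equals that of `n`. -/
lemma factorization_piPart (μ : Set ℕ) {n : ℕ} (hn : n ≠ 0) {p : ℕ} (hp : p.Prime)
    (hpμ : p ∈ μ) : (piPart μ n).factorization p = n.factorization p := by
  have hco : (coPiPart μ n).factorization p = 0 := by
    rw [Nat.factorization_eq_zero_iff]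
    right; left
    intro hdvd
    exact absurd (isPiNumber_coPiPart μ n p hp hdvd) (by simp [hpμ])
  have hmul := piPart_mul_coPiPart μ hn
  have h1 : piPart μ n ≠ 0 := piPart_ne_zero μ hn
  have h2 : coPiPart μ n ≠ 0 := by
    intro h; rw [h, mul_zero] at hmul; exact hn hmul.symm
  have := Nat.factorization_mul h1 h2
  have : (piPart μ n * coPiPart μ n).factorization p
      = (piPart μ n).factorization p + (coPiPart μ n).factorization p := by
    rw [this]; rfl
  rw [hmul] at this
  omega

lemma IsPiNumber.of_dvd {π : Set ℕ} {m n : ℕ} (h : m ∣ n) (hn : IsPiNumber π n) :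
    IsPiNumber π m := fun p hp hd => hn p hp (hd.trans h)

lemma IsPiNumber.mul {π : Set ℕ} {m n : ℕ} (hm : IsPiNumber π m) (hn : IsPiNumber π n) :
    IsPiNumber π (m * n) := fun p hp hd =>
  ((Nat.Prime.dvd_mul hp).mp hd).elim (hm p hp) (hn p hp)

set_option linter.unusedSectionVars false

section GroupLemmas

variable {G : Type*} [Group G] [Finite G]

lemma card_sup_mul_card_inf (N H : Subgroup G) [N.Normal] :
    Nat.card ↥(N ⊔ H) * Nat.card ↥(N ⊓ H) = Nat.card N * Nat.card H := by
  have h1 : Nat.card (N.subgroupOf (N ⊔ H)) * (N.subgroupOf (N ⊔ H)).index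
      = Nat.card ↥(N ⊔ H) := Subgroup.card_mul_index _
  have h2 : Nat.card ((N ⊓ H).subgroupOf H) * ((N ⊓ H).subgroupOf H).index
      = Nat.card H := Subgroup.card_mul_index _
  have e1 : Nat.card (N.subgroupOf (N ⊔ H)) = Nat.card N :=
    Nat.card_congr (Subgroup.subgroupOfEquivOfLe le_sup_left).toEquiv
  have e2 : Nat.card ((N ⊓ H).subgroupOf H) = Nat.card ↥(N ⊓ H) :=
    Nat.card_congr (Subgroup.subgroupOfEquivOfLe inf_le_right).toEquiv
  have e3 : (N.subgroupOf (N ⊔ H)).index = ((N ⊓ H).subgroupOf H).index := by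
    show N.relIndex (N ⊔ H) = (N ⊓ H).relIndex H
    rw [Subgroup.relIndex_sup_left, Subgroup.inf_relIndex_right]
  rw [e1, e3] at h1
  calc Nat.card ↥(N ⊔ H) * Nat.card ↥(N ⊓ H)
      = Nat.card N * ((N ⊓ H).subgroupOf H).index * Nat.card ↥(N ⊓ H) := by rw [h1]
    _ = Nat.card N * (Nat.card ↥(N ⊓ H) * ((N ⊓ H).subgroupOf H).index) := by ring
    _ = Nat.card N * Nat.card H := by rw [← e2, h2]

/-- The subgroup of `μ`-elements of a subgroup with commuting elements. -/
def piSub (μ : Set ℕ) (K : Subgroup G)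
    (hcomm : ∀ a ∈ K, ∀ b ∈ K, a * b = b * a) : Subgroup G where
  carrier := {x | x ∈ K ∧ IsPiNumber μ (orderOf x)}
  one_mem' := ⟨K.one_mem, fun p hp hd => absurd (Nat.dvd_one.mp (by simpa using hd)) hp.ne_one⟩
  mul_mem' := by
    rintro a b ⟨haK, hoa⟩ ⟨hbK, hob⟩
    refine ⟨K.mul_mem haK hbK, ?_⟩
    have hc : Commute a b := hcomm a haK b hbK
    have h1 : orderOf (a * b) ∣ orderOf a * orderOf b :=
      (hc.orderOf_mul_dvd_lcm).trans (Nat.lcm_dvd_mul _ _)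
    exact (hoa.mul hob).of_dvd h1
  inv_mem' := by
    rintro a ⟨haK, hoa⟩
    exact ⟨K.inv_mem haK, by rwa [orderOf_inv]⟩

lemma mem_piSub {μ : Set ℕ} {K : Subgroup G} {hcomm : ∀ a ∈ K, ∀ b ∈ K, a * b = b * a}
    {x : G} : x ∈ piSub μ K hcomm ↔ x ∈ K ∧ IsPiNumber μ (orderOf x) := Iff.rfl

lemma piSub_le {μ : Set ℕ} {K : Subgroup G} {hcomm : ∀ a ∈ K, ∀ b ∈ K, a * b = b * a} :
    piSub μ K hcomm ≤ K := fun _ hx => hx.1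

lemma isPiNumber_card_piSub (μ : Set ℕ) (K : Subgroup G)
    (hcomm : ∀ a ∈ K, ∀ b ∈ K, a * b = b * a) :
    IsPiNumber μ (Nat.card (piSub μ K hcomm)) := by
  intro p hp hd
  haveI : Fact p.Prime := ⟨hp⟩
  obtain ⟨x, hx⟩ := exists_prime_orderOf_dvd_card' (G := ↥(piSub μ K hcomm)) p hd
  have hxo : orderOf (x : G) = p := by rw [Subgroup.orderOf_coe, hx]
  exact x.2.2 p hp (hxo ▸ dvd_refl _)

lemma piPart_dvd_card_piSub (μ : Set ℕ) (K : Subgroup G) (hK : IsCyclic ↥K)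
    (hcomm : ∀ a ∈ K, ∀ b ∈ K, a * b = b * a) :
    piPart μ (Nat.card K) ∣ Nat.card (piSub μ K hcomm) := by
  obtain ⟨g, hg⟩ := hK.exists_ofOrder_eq_natCard
  set n := Nat.card K with hn
  have hn0 : n ≠ 0 := Nat.card_pos.ne'
  set d := piPart μ n with hd
  have hdvd : d ∣ n := piPart_dvd μ n
  have hgo : orderOf (g : G) = n := by rw [Subgroup.orderOf_coe, hg]
  set x : G := (g : G) ^ (n / d) with hx
  have hxK : x ∈ K := K.pow_mem g.2 _
  have hxo : orderOf x = d := by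
    rw [hx, orderOf_pow, hgo, Nat.gcd_eq_right (Nat.div_dvd_of_dvd hdvd),
      Nat.div_div_self hdvd hn0]
  have hle : Subgroup.zpowers x ≤ piSub μ K hcomm := by
    intro y hy
    refine ⟨?_, ?_⟩
    · obtain ⟨k, rfl⟩ := hy
      exact K.zpow_mem hxK k
    · have : orderOf y ∣ d := hxo ▸ orderOf_dvd_of_mem_zpowers hy
      exact (isPiNumber_piPart μ n).of_dvd this
  have := Subgroup.card_dvd_of_le hle
  rwa [Nat.card_zpowers, hxo] at this

lemma factorization_card_piSub (μ : Set ℕ) (K : Subgroup G) (hK : IsCyclic ↥K)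
    (hcomm : ∀ a ∈ K, ∀ b ∈ K, a * b = b * a) {p : ℕ} (hp : p.Prime) (hpμ : p ∈ μ) :
    (Nat.card (piSub μ K hcomm)).factorization p = (Nat.card K).factorization p := by
  have hn0 : Nat.card K ≠ 0 := Nat.card_pos.ne'
  have hs0 : Nat.card (piSub μ K hcomm) ≠ 0 := Nat.card_pos.ne'
  have hd0 : piPart μ (Nat.card K) ≠ 0 := piPart_ne_zero μ hn0
  have h1 := (Nat.factorization_le_iff_dvd hd0 hs0).mpr (piPart_dvd_card_piSub μ K hK hcomm)
  have h2 := (Nat.factorization_le_iff_dvd hs0 hn0).mpr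
    (Subgroup.card_dvd_of_le (piSub_le (μ := μ) (K := K) (hcomm := hcomm)))
  have h3 := factorization_piPart μ hn0 hp hpμ
  have := h1 p
  have := h2 p
  omega

end GroupLemmas

theorem stmt9 {G : Type*} [Group G] [Finite G] (A B : Subgroup G) (hA : A.Normal)
    (hcA : IsCyclic A) (hcB : IsCyclic B)
    (hfac : ∀ g : G, ∃ a ∈ A, ∃ b ∈ B, g = a * b) (μ : Set ℕ) :
    ∃ H : Subgroup G,
      (H : Set G) = {x : G | ∃ a ∈ A, ∃ b ∈ B,
        IsPiNumber μ (orderOf a) ∧ IsPiNumber μ (orderOf b) ∧ x = a * b} ∧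
      IsHallSubgroup μ H := by
  haveI := hA
  have commA : ∀ a ∈ A, ∀ b ∈ A, a * b = b * a := by
    haveI := hcA
    letI : CommGroup ↥A := IsCyclic.commGroup
    intro a ha b hb
    exact congrArg Subtype.val (mul_comm (⟨a, ha⟩ : ↥A) ⟨b, hb⟩)
  have commB : ∀ a ∈ B, ∀ b ∈ B, a * b = b * a := by
    haveI := hcB
    letI : CommGroup ↥B := IsCyclic.commGroup
    intro a ha b hb
    exact congrArg Subtype.val (mul_comm (⟨a, ha⟩ : ↥B) ⟨b, hb⟩)
  set SA := piSub μ A commA with hSA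
  set SB := piSub μ B commB with hSB
  haveI : SA.Normal := by
    constructor
    intro x hx g
    refine ⟨hA.conj_mem x hx.1 g, ?_⟩
    have hsc : SemiconjBy g x (g * x * g⁻¹) := by unfold SemiconjBy; group
    rw [← hsc.orderOf_eq]
    exact hx.2
  refine ⟨SA ⊔ SB, ?_, ?_, ?_⟩
  · rw [Subgroup.normal_mul]
    ext x
    constructor
    · rintro ⟨a, ⟨haA, hoa⟩, b, ⟨hbB, hob⟩, rfl⟩
      exact ⟨a, haA, b, hbB, hoa, hob, rfl⟩
    · rintro ⟨a, haA, b, hbB, hoa, hob, rfl⟩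
      exact ⟨a, ⟨haA, hoa⟩, b, ⟨hbB, hob⟩, rfl⟩
  · -- card is a μ-number
    have E1 := card_sup_mul_card_inf SA SB
    have hdvd : Nat.card ↥(SA ⊔ SB) ∣ Nat.card SA * Nat.card SB := ⟨_, E1.symm⟩
    exact ((isPiNumber_card_piSub μ A commA).mul (isPiNumber_card_piSub μ B commB)).of_dvd hdvd
  · -- index is a μ'-number
    intro p hp hd
    simp only [Set.mem_setOf_eq]
    by_contra hpμ
    haveI : IsCyclic ↥B := hcB
    have hABc : IsCyclic ↥(A ⊓ B) := Subgroup.isCyclic_of_le inf_le_right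
    have commAB : ∀ a ∈ A ⊓ B, ∀ b ∈ A ⊓ B, a * b = b * a :=
      fun a ha b hb => commA a ha.1 b hb.1
    have hSS : SA ⊓ SB = piSub μ (A ⊓ B) commAB := by
      ext x
      simp only [Subgroup.mem_inf, hSA, hSB, mem_piSub]
      tauto
    have hT : A ⊔ B = ⊤ := by
      rw [eq_top_iff]
      intro g _
      obtain ⟨a, ha, b, hb, rfl⟩ := hfac g
      exact mul_mem (Subgroup.mem_sup_left ha) (Subgroup.mem_sup_right hb)
    have E2 := card_sup_mul_card_inf A B
    rw [hT, Subgroup.card_top] at E2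
    have E1 := card_sup_mul_card_inf SA SB
    have E3 := Subgroup.card_mul_index (SA ⊔ SB)
    have F1 : (Nat.card SA).factorization p = (Nat.card A).factorization p :=
      factorization_card_piSub μ A hcA commA hp hpμ
    have F2 : (Nat.card SB).factorization p = (Nat.card B).factorization p :=
      factorization_card_piSub μ B hcB commB hp hpμ
    have F3 : (Nat.card ↥(SA ⊓ SB)).factorization p
        = (Nat.card ↥(A ⊓ B)).factorization p := by
      rw [hSS]
      exact factorization_card_piSub μ (A ⊓ B) hABc commAB hp hpμ
    have n1 : Nat.card ↥(SA ⊔ SB) ≠ 0 := Nat.card_pos.ne'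
    have n2 : Nat.card ↥(SA ⊓ SB) ≠ 0 := Nat.card_pos.ne'
    have n3 : Nat.card SA ≠ 0 := Nat.card_pos.ne'
    have n4 : Nat.card SB ≠ 0 := Nat.card_pos.ne'
    have n5 : Nat.card G ≠ 0 := Nat.card_pos.ne'
    have n6 : Nat.card ↥(A ⊓ B) ≠ 0 := Nat.card_pos.ne'
    have n7 : Nat.card A ≠ 0 := Nat.card_pos.ne'
    have n8 : Nat.card B ≠ 0 := Nat.card_pos.ne'
    have n9 : (SA ⊔ SB).index ≠ 0 := Subgroup.index_ne_zero_of_finite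
    have e1 : (Nat.card ↥(SA ⊔ SB)).factorization p + (Nat.card ↥(SA ⊓ SB)).factorization p
        = (Nat.card SA).factorization p + (Nat.card SB).factorization p := by
      have h := congrArg Nat.factorization E1
      rw [Nat.factorization_mul n1 n2, Nat.factorization_mul n3 n4] at h
      simpa using DFunLike.congr_fun h p
    have e2 : (Nat.card G).factorization p + (Nat.card ↥(A ⊓ B)).factorization p
        = (Nat.card A).factorization p + (Nat.card B).factorization p := by
      have h := congrArg Nat.factorization E2
      rw [Nat.factorization_mul n5 n6, Nat.factorization_mul n7 n8] at h
      simpa using DFunLike.congr_fun h p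
    have e3 : (Nat.card ↥(SA ⊔ SB)).factorization p + ((SA ⊔ SB).index).factorization p
        = (Nat.card G).factorization p := by
      have h := congrArg Nat.factorization E3
      rw [Nat.factorization_mul n1 n9] at h
      simpa using DFunLike.congr_fun h p
    have hpi : 0 < ((SA ⊔ SB).index).factorization p :=
      hp.factorization_pos_of_dvd n9 hd
    omega
end

section
/- Let G be a finite group with a metacyclic factorization G = A·B (A normal cyclic, B cyclic). Let p be a prime dividing |A| such that G has no normal Hall p'-subgroup. Then the Sylow p-subgroup of the commutator subgroup G' equals the Sylow p-subgroup of A, and the Sylow p-subgroups of A and B intersect trivially. -/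
open scoped Pointwise
open scoped commutatorElement

lemma int_coprime_of_prime_not_dvd {p : ℕ} (hp : p.Prime) {z : ℤ} (h : ¬ (p:ℤ) ∣ z) :
    IsCoprime (p:ℤ) z := by
  rw [Int.isCoprime_iff_gcd_eq_one]
  have : ¬ p ∣ z.natAbs := fun hd => h (Int.natCast_dvd.mpr hd)
  simpa [Int.gcd] using (hp.coprime_iff_not_dvd).mpr this

lemma aux_nt {p k s : ℕ} (hp : p.Prime) (hs : ¬ p ∣ s) {m : ℤ}
    (h1 : (p:ℤ) ∣ m - 1) (h2 : ((p:ℤ))^k ∣ m^s - 1) : ((p:ℤ))^k ∣ m - 1 := by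
  have hfac : (∑ i ∈ Finset.range s, m ^ i) * (m - 1) = m ^ s - 1 := geom_sum_mul m s
  have hnd : ¬ (p:ℤ) ∣ (∑ i ∈ Finset.range s, m ^ i) := by
    intro hd
    have h3 : (p:ℤ) ∣ (∑ i ∈ Finset.range s, m ^ i) - s := by
      have : (∑ i ∈ Finset.range s, m ^ i) - s = ∑ i ∈ Finset.range s, (m ^ i - 1) := by
        rw [Finset.sum_sub_distrib]; simp
      rw [this]
      refine Finset.dvd_sum fun i _ => ?_
      have : m ^ i - 1 = (m - 1) * ∑ j ∈ Finset.range i, m ^ j := by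
        rw [mul_comm, geom_sum_mul]
      rw [this]
      exact h1.mul_right _
    have : (p:ℤ) ∣ (s:ℤ) := (dvd_sub_right hd).mp h3
    exact hs (by exact_mod_cast this)
  have hc : IsCoprime ((p:ℤ)^k) (∑ i ∈ Finset.range s, m ^ i) :=
    (int_coprime_of_prime_not_dvd hp hnd).pow_left
  refine hc.dvd_of_dvd_mul_left ?_
  rwa [hfac]

theorem stmt10 {G : Type*} [Group G] [Finite G] (A B : Subgroup G) (hA : A.Normal)
    (hcA : IsCyclic A) (hcB : IsCyclic B)
    (hfac : ∀ g : G, ∃ a ∈ A, ∃ b ∈ B, g = a * b)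
    (p : ℕ) (hp : p.Prime) (hpA : p ∣ Nat.card A)
    (hno : ¬ ∃ N : Subgroup G, N.Normal ∧
      IsHallSubgroup {q : ℕ | q.Prime ∧ q ≠ p} N) :
    ({g : G | g ∈ commutator G ∧ ∃ k : ℕ, orderOf g = p ^ k} =
      {g : G | g ∈ A ∧ ∃ k : ℕ, orderOf g = p ^ k}) ∧
    (∀ g : G, g ∈ A → g ∈ B → (∃ k : ℕ, orderOf g = p ^ k) → g = 1) := by
  classical
  obtain ⟨ga, hga⟩ := hcA.exists_generator
  set a0 : G := (ga : G) with ha0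
  have hAz : A = Subgroup.zpowers a0 := by
    ext h; constructor
    · intro hh
      obtain ⟨i, hi⟩ := Subgroup.mem_zpowers_iff.mp (hga ⟨h, hh⟩)
      exact Subgroup.mem_zpowers_iff.mpr ⟨i, by erw [← SubgroupClass.coe_zpow, hi]⟩
    · rintro ⟨i, rfl⟩; exact A.zpow_mem ga.2 i
  have hnA : Nat.card A = orderOf a0 := by rw [hAz, Nat.card_zpowers]
  have hnA0 : Nat.card A ≠ 0 := Nat.card_pos.ne'
  set k := (Nat.card A).factorization p with hk
  set t := Nat.card A / p ^ k with ht
  have hkt : p ^ k * t = Nat.card A := Nat.ordProj_mul_ordCompl_eq_self _ p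
  have hpt : ¬ p ∣ t := Nat.not_dvd_ordCompl hp hnA0
  have ht0 : t ≠ 0 := by
    intro h; rw [h, mul_zero] at hkt; exact hnA0 hkt.symm
  have hk1 : 1 ≤ k := (Nat.Prime.factorization_pos_of_dvd hp hnA0 hpA)
  set x := a0 ^ t with hx
  have hxA : x ∈ A := by rw [hAz]; exact Subgroup.pow_mem _ (Subgroup.mem_zpowers a0) t
  have hox : orderOf x = p ^ k := by
    rw [hx, orderOf_pow, ← hnA, hkt.symm, Nat.gcd_eq_right ⟨p ^ k, mul_comm _ _⟩,
      Nat.mul_div_cancel _ (Nat.pos_of_ne_zero ht0)]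
  -- B side
  obtain ⟨gb, hgb⟩ := hcB.exists_generator
  set b0 : G := (gb : G) with hb0
  have hBz : B = Subgroup.zpowers b0 := by
    ext h; constructor
    · intro hh
      obtain ⟨i, hi⟩ := Subgroup.mem_zpowers_iff.mp (hgb ⟨h, hh⟩)
      exact Subgroup.mem_zpowers_iff.mpr ⟨i, by erw [← SubgroupClass.coe_zpow, hi]⟩
    · rintro ⟨i, rfl⟩; exact B.zpow_mem gb.2 i
  have hnB : Nat.card B = orderOf b0 := by rw [hBz, Nat.card_zpowers]
  have hnB0 : Nat.card B ≠ 0 := Nat.card_pos.ne'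
  set e := (Nat.card B).factorization p with he
  set s := Nat.card B / p ^ e with hs
  have hes : p ^ e * s = Nat.card B := Nat.ordProj_mul_ordCompl_eq_self _ p
  have hps : ¬ p ∣ s := Nat.not_dvd_ordCompl hp hnB0
  have hs0 : s ≠ 0 := by
    intro h; rw [h, mul_zero] at hes; exact hnB0 hes.symm
  set q := b0 ^ (p ^ e) with hq
  have hqB : q ∈ B := by rw [hBz]; exact Subgroup.pow_mem _ (Subgroup.mem_zpowers b0) _
  have hoq : orderOf q = s := by
    rw [hq, orderOf_pow, ← hnB, hes.symm, Nat.gcd_eq_right (dvd_mul_right _ _),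
      Nat.mul_div_cancel_left _ (pow_pos hp.pos e)]
  -- p-elements of A lie in zpowers x
  have hPmem : ∀ g : G, g ∈ A → (∃ c : ℕ, orderOf g = p ^ c) → g ∈ Subgroup.zpowers x := by
    rintro g hg ⟨c, hc⟩
    have hdvd : orderOf g ∣ p ^ k := by
      have h1 : orderOf g ∣ Nat.card A := Subgroup.orderOf_dvd_natCard A hg
      rw [hc] at h1 ⊢
      rw [← hkt] at h1
      have hco : Nat.Coprime (p ^ c) t :=
        Nat.Coprime.pow_left _ ((Nat.Prime.coprime_iff_not_dvd hp).mpr hpt)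
      exact hco.dvd_of_dvd_mul_right h1
    obtain ⟨j, hj⟩ := Subgroup.mem_zpowers_iff.mp (by rw [hAz] at hg; exact hg)
    have hco2 : IsCoprime (t : ℤ) ((p ^ k : ℕ) : ℤ) := by
      rw [Nat.isCoprime_iff_coprime]
      exact Nat.Coprime.pow_right _ (Nat.coprime_comm.mp ((Nat.Prime.coprime_iff_not_dvd hp).mpr hpt))
    obtain ⟨u, v, huv⟩ := hco2
    have hgp : g ^ ((p ^ k : ℕ) : ℤ) = 1 :=
      orderOf_dvd_iff_zpow_eq_one.mp (Int.natCast_dvd_natCast.mpr hdvd)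
    have hgt : g ^ (t : ℤ) = x ^ j := by
      rw [← hj]
      show (a0 ^ j) ^ (t:ℤ) = (a0 ^ t) ^ j
      rw [← zpow_natCast a0 t, ← zpow_mul, ← zpow_mul, mul_comm]
    have : g = x ^ (j * u) := by
      calc g = g ^ (u * (t:ℤ) + v * ((p ^ k : ℕ) : ℤ)) := by rw [huv, zpow_one]
        _ = (g ^ (t:ℤ)) ^ u * (g ^ ((p ^ k : ℕ) : ℤ)) ^ v := by
              rw [zpow_add, mul_comm u, mul_comm v, zpow_mul, zpow_mul]
        _ = (x ^ j) ^ u * 1 := by rw [hgt, hgp, one_zpow]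
        _ = x ^ (j * u) := by rw [mul_one, ← zpow_mul]
    rw [this]; exact Subgroup.zpow_mem _ (Subgroup.mem_zpowers x) _
  -- the conjugation exponent m
  have hconjA : q * x * q⁻¹ ∈ Subgroup.zpowers x := by
    refine hPmem _ (hA.conj_mem x hxA q) ⟨k, ?_⟩
    have := orderOf_injective (MulAut.conj q).toMonoidHom (MulEquiv.injective _) x
    simpa [MulAut.conj_apply, hox] using this
  obtain ⟨m, hm⟩ := Subgroup.mem_zpowers_iff.mp hconjA
  have hconj : ∀ i : ℤ, q * x ^ i * q⁻¹ = x ^ (m * i) := by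
    intro i
    have h1 : q * x ^ i * q⁻¹ = (q * x * q⁻¹) ^ i := by
      have := map_zpow (MulAut.conj q) x i
      simpa [MulAut.conj_apply] using this
    rw [h1, ← hm, ← zpow_mul]
  have hpows : ∀ j : ℕ, q ^ j * x * (q ^ j)⁻¹ = x ^ (m ^ j) := by
    intro j; induction j with
    | zero => simp
    | succ n ih =>
      have : q ^ (n+1) * x * (q ^ (n+1))⁻¹ = q * (q ^ n * x * (q ^ n)⁻¹) * q⁻¹ := by
        rw [pow_succ']; group
      rw [this, ih, hconj, pow_succ']
  have hms : ((p ^ k : ℕ) : ℤ) ∣ m ^ s - 1 := by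
    have hqs : q ^ s = 1 := by rw [← hoq]; exact pow_orderOf_eq_one q
    have h1 : x = x ^ (m ^ s) := by
      have := hpows s
      rwa [hqs, one_mul, inv_one, mul_one] at this
    have h2 : x ^ (m ^ s - 1) = 1 := by
      rw [zpow_sub, ← h1, zpow_one]; simp
    have := orderOf_dvd_iff_zpow_eq_one.mpr h2
    rwa [hox] at this
  have hxpk : x ^ ((p ^ k : ℕ) : ℤ) = 1 := by
    rw [← hox, zpow_natCast, pow_orderOf_eq_one]
  haveI := hA
  by_cases hcase : (p:ℤ) ∣ m - 1
  · -- Case: p ∣ m - 1 : q centralizes x; build a normal Hall p'-subgroup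
    exfalso
    have hconjz : ∀ (g y : G) (w : ℤ), g * y ^ w * g⁻¹ = (g * y * g⁻¹) ^ w := by
      intro g y w
      have := map_zpow (MulAut.conj g) y w
      simpa [MulAut.conj_apply] using this
    have hms' : ((p:ℤ))^k ∣ m ^ s - 1 := by rwa [Nat.cast_pow] at hms
    have hpk1 : ((p ^ k : ℕ) : ℤ) ∣ m - 1 := by
      rw [Nat.cast_pow]; exact aux_nt hp hps hcase hms'
    have hqxc : ∀ i : ℤ, q * x ^ i * q⁻¹ = x ^ i := by
      intro i
      rw [hconj]
      have h1 : m * i = i + (m - 1) * i := by ring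
      rw [h1, zpow_add]
      obtain ⟨d, hd⟩ := hpk1
      have h2 : x ^ ((m - 1) * i) = 1 := by
        rw [hd, mul_assoc, zpow_mul, hxpk, one_zpow]
      rw [h2, mul_one]
    have hAcomm : ∀ y z : G, y ∈ A → z ∈ A → Commute y z := by
      intro y z hy hz
      obtain ⟨iy, hiy⟩ := Subgroup.mem_zpowers_iff.mp (by rw [hAz] at hy; exact hy)
      obtain ⟨iz, hiz⟩ := Subgroup.mem_zpowers_iff.mp (by rw [hAz] at hz; exact hz)
      rw [← hiy, ← hiz]
      exact Commute.zpow_zpow (Commute.refl a0) _ _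
    set A' : Subgroup G := Subgroup.zpowers (a0 ^ (p ^ k)) with hA'
    have hoa' : orderOf (a0 ^ (p ^ k)) = t := by
      rw [orderOf_pow, ← hnA, ← hkt, Nat.gcd_eq_right (dvd_mul_right _ _),
        Nat.mul_div_cancel_left _ (pow_pos hp.pos k)]
    have hA'card : Nat.card A' = t := by rw [hA', Nat.card_zpowers, hoa']
    have hA'A : A' ≤ A := by
      rw [hAz]
      exact Subgroup.zpowers_le.mpr (Subgroup.pow_mem _ (Subgroup.mem_zpowers a0) _)
    have ha0pkA' : (a0 ^ (p ^ k)) ∈ A' := Subgroup.mem_zpowers _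
    have hA'norm : A'.Normal := by
      constructor
      intro n hn g
      obtain ⟨j, hj⟩ := Subgroup.mem_zpowers_iff.mp hn
      have ha0A : a0 ∈ A := by rw [hAz]; exact Subgroup.mem_zpowers a0
      have hconjmem : g * a0 * g⁻¹ ∈ Subgroup.zpowers a0 := by
        rw [← hAz]; exact hA.conj_mem a0 ha0A g
      obtain ⟨c, hc⟩ := Subgroup.mem_zpowers_iff.mp hconjmem
      refine Subgroup.mem_zpowers_iff.mpr ⟨c * j, ?_⟩
      have step : g * n * g⁻¹ = (g * a0 * g⁻¹) ^ (((p ^ k : ℕ) : ℤ) * j) := by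
        rw [← hconjz]
        congr 1
        rw [← hj, ← zpow_natCast a0 (p ^ k), ← zpow_mul]
      rw [step, ← hc, ← zpow_mul, ← zpow_natCast a0 (p ^ k), ← zpow_mul]
      congr 1
      ring
    have memA' : ∀ c : G, c ∈ A → c ^ t = 1 → c ∈ A' := by
      intro c hc hct
      obtain ⟨j, hj⟩ := Subgroup.mem_zpowers_iff.mp (by rw [hAz] at hc; exact hc)
      have h1 : (orderOf a0 : ℤ) ∣ j * (t : ℤ) := by
        apply orderOf_dvd_iff_zpow_eq_one.mpr
        rw [zpow_mul, hj, zpow_natCast]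
        exact hct
      have h2 : ((p ^ k * t : ℕ) : ℤ) ∣ j * (t : ℤ) := by rwa [hkt, hnA]
      obtain ⟨d, hd⟩ := h2
      have h3 : j = ((p ^ k : ℕ) : ℤ) * d := by
        have ht0' : (t : ℤ) ≠ 0 := Int.natCast_ne_zero.mpr ht0
        apply mul_right_cancel₀ ht0'
        push_cast at hd ⊢
        linarith [hd]
      refine Subgroup.mem_zpowers_iff.mpr ⟨d, ?_⟩
      rw [← hj, h3, ← zpow_natCast a0 (p ^ k), ← zpow_mul]
    set Q : Subgroup G := Subgroup.zpowers q with hQdef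
    set N : Subgroup G := A' ⊔ Q with hNdef
    have hA'N : A' ≤ N := le_sup_left
    have hQN : Q ≤ N := le_sup_right
    have hqconjN : ∀ g : G, g * q * g⁻¹ ∈ N := by
      intro g
      obtain ⟨a, haA, b, hbB, rfl⟩ := hfac g
      obtain ⟨z, hz⟩ := Subgroup.mem_zpowers_iff.mp (by rw [hBz] at hbB; exact hbB)
      have hbq : b * q * b⁻¹ = q := by
        rw [← hz]
        have hcm : Commute (b0 ^ z) q :=
          Commute.pow_right (Commute.zpow_left (Commute.refl b0) z) (p ^ e)
        rw [hcm.eq, mul_assoc]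
        simp
      have hgq : a * b * q * (a * b)⁻¹ = a * q * a⁻¹ := by
        have h1 : a * b * q * (a * b)⁻¹ = a * (b * q * b⁻¹) * a⁻¹ := by group
        rw [h1, hbq]
      have hqinvA : q * a⁻¹ * q⁻¹ ∈ A := hA.conj_mem _ (A.inv_mem haA) q
      have hccA : a * (q * a⁻¹ * q⁻¹) ∈ A := A.mul_mem haA hqinvA
      obtain ⟨w, hw⟩ := Subgroup.mem_zpowers_iff.mp (by rw [hAz] at haA; exact haA)
      have h4 : (a⁻¹) ^ t = x ^ (-w) := by
        rw [← hw, ← zpow_neg, ← zpow_natCast (a0 ^ (-w)) t, ← zpow_mul]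
        show a0 ^ (-w * (t:ℤ)) = (a0 ^ t) ^ (-w)
        rw [← zpow_natCast a0 t, ← zpow_mul]
        congr 1
        ring
      have h5 : a ^ t = x ^ w := by
        rw [← hw, ← zpow_natCast (a0 ^ w) t, ← zpow_mul]
        show a0 ^ (w * (t:ℤ)) = (a0 ^ t) ^ w
        rw [← zpow_natCast a0 t, ← zpow_mul]
        congr 1
        ring
      have hcct : (a * (q * a⁻¹ * q⁻¹)) ^ t = 1 := by
        have hcomm2 : Commute a (q * a⁻¹ * q⁻¹) := hAcomm _ _ haA hqinvA
        rw [hcomm2.mul_pow]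
        have h3 : (q * a⁻¹ * q⁻¹) ^ t = q * (a⁻¹) ^ t * q⁻¹ := by
          have := map_pow (MulAut.conj q) a⁻¹ t
          simpa [MulAut.conj_apply] using this.symm
        rw [h3, h4, hqxc (-w), h5, ← zpow_add]
        simp
      have hccA' : a * (q * a⁻¹ * q⁻¹) ∈ A' := memA' _ hccA hcct
      have hsplit : a * b * q * (a * b)⁻¹ = (a * (q * a⁻¹ * q⁻¹)) * q := by
        rw [hgq]
        group
      rw [hsplit]
      exact N.mul_mem (hA'N hccA') (hQN (Subgroup.mem_zpowers q))
    have hNnorm : N.Normal := by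
      constructor
      intro n hn g
      have h1 : N.map (MulAut.conj g).toMonoidHom ≤ N := by
        rw [hNdef, Subgroup.map_sup]
        apply sup_le
        · intro y hy
          obtain ⟨aa, haa, rfl⟩ := hy
          exact hA'N (hA'norm.conj_mem aa haa g)
        · rw [hQdef, MonoidHom.map_zpowers]
          apply Subgroup.zpowers_le.mpr
          simpa [MulAut.conj_apply] using hqconjN g
      have h2 := h1 (Subgroup.mem_map_of_mem (MulAut.conj g).toMonoidHom hn)
      simpa [MulAut.conj_apply] using h2
    have hpN : ¬ p ∣ Nat.card N := by
      intro hdvd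
      haveI : Fact p.Prime := ⟨hp⟩
      obtain ⟨nn, hon⟩ := exists_prime_orderOf_dvd_card' (G := ↥N) p hdvd
      have honG : orderOf (nn : G) = p := (Subgroup.orderOf_coe nn).trans hon
      haveI := hA'norm
      have hmem : (nn : G) ∈ (↑A' : Set G) * (↑Q : Set G) := by
        rw [← Subgroup.normal_mul]
        exact nn.2
      obtain ⟨a', ha', w, hw, hprod⟩ := hmem
      obtain ⟨z, hz⟩ := Subgroup.mem_zpowers_iff.mp hw
      set πq := QuotientGroup.mk' A' with hπq
      have h1 : (πq (nn : G)) ^ p = 1 := by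
        rw [← map_pow, ← honG, pow_orderOf_eq_one, map_one]
      have h2 : πq (nn : G) = (πq q) ^ z := by
        have ha'1 : πq a' = 1 := (QuotientGroup.eq_one_iff a').mpr ha'
        rw [← hprod, map_mul, ha'1, one_mul, ← hz, map_zpow]
      have hqs1 : (πq q) ^ s = 1 := by
        rw [← map_pow, ← hoq, pow_orderOf_eq_one, map_one]
      have h3 : (πq (nn : G)) ^ s = 1 := by
        rw [h2, ← zpow_natCast ((πq q) ^ z) s, ← zpow_mul, mul_comm z (s:ℤ), zpow_mul,
          zpow_natCast, hqs1, one_zpow]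
      have h4 : orderOf (πq (nn : G)) ∣ Nat.gcd p s :=
        Nat.dvd_gcd (orderOf_dvd_of_pow_eq_one h1) (orderOf_dvd_of_pow_eq_one h3)
      have h5 : Nat.gcd p s = 1 := (Nat.Prime.coprime_iff_not_dvd hp).mpr hps
      have h6 : πq (nn : G) = 1 := orderOf_eq_one_iff.mp (Nat.dvd_one.mp (h5 ▸ h4))
      have h7 : (nn : G) ∈ A' := (QuotientGroup.eq_one_iff _).mp h6
      have h8 : orderOf (nn : G) ∣ t := by
        rw [← hA'card]
        exact Subgroup.orderOf_dvd_natCard A' h7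
      rw [honG] at h8
      exact hpt h8
    haveI := hNnorm
    have hindex : N.index ∣ p ^ (k + e) := by
      set πN := QuotientGroup.mk' N with hπN
      set Abar : Subgroup (G ⧸ N) := Subgroup.zpowers (πN a0) with hAbar
      have hAbarN : Abar.Normal := by
        have hmapeq : Abar = A.map πN := by
          rw [hAbar, hAz, MonoidHom.map_zpowers]
        rw [hmapeq]
        exact Subgroup.Normal.map hA πN (QuotientGroup.mk'_surjective N)
      have hcardAbar : Nat.card Abar ∣ p ^ k := by
        rw [hAbar, Nat.card_zpowers]
        apply orderOf_dvd_of_pow_eq_one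
        rw [← map_pow]
        exact (QuotientGroup.eq_one_iff _).mpr (hA'N ha0pkA')
      haveI := hAbarN
      set ρ := (QuotientGroup.mk' Abar).comp πN with hρ
      have hAbarindex : Abar.index ∣ p ^ e := by
        rw [Subgroup.index_eq_card]
        have htop : Subgroup.zpowers (ρ b0) = ⊤ := by
          rw [Subgroup.eq_top_iff']
          intro y
          obtain ⟨y1, rfl⟩ := QuotientGroup.mk'_surjective Abar y
          obtain ⟨g0, rfl⟩ := QuotientGroup.mk'_surjective N y1
          obtain ⟨a, haA, b, hbB, rfl⟩ := hfac g0
          obtain ⟨z, hzb⟩ := Subgroup.mem_zpowers_iff.mp (by rw [hBz] at hbB; exact hbB)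
          obtain ⟨za, hza⟩ := Subgroup.mem_zpowers_iff.mp (by rw [hAz] at haA; exact haA)
          refine Subgroup.mem_zpowers_iff.mpr ⟨z, ?_⟩
          have e1 : ρ a = 1 := by
            rw [hρ, MonoidHom.comp_apply]
            apply (QuotientGroup.eq_one_iff _).mpr
            rw [hAbar]
            exact Subgroup.mem_zpowers_iff.mpr ⟨za, by rw [← hza, map_zpow]⟩
          show ρ b0 ^ z = ρ (a * b)
          rw [map_mul, e1, one_mul, ← hzb, map_zpow]
        have hcard2 : Nat.card ((G ⧸ N) ⧸ Abar) = orderOf (ρ b0) := by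
          calc Nat.card ((G ⧸ N) ⧸ Abar)
              = Nat.card (⊤ : Subgroup ((G ⧸ N) ⧸ Abar)) := Subgroup.card_top.symm
            _ = Nat.card (Subgroup.zpowers (ρ b0)) := by rw [htop]
            _ = orderOf (ρ b0) := Nat.card_zpowers _
        rw [hcard2]
        apply orderOf_dvd_of_pow_eq_one
        rw [← map_pow]
        show ρ q = 1
        rw [hρ, MonoidHom.comp_apply]
        have hq1 : πN q = 1 := (QuotientGroup.eq_one_iff q).mpr (hQN (Subgroup.mem_zpowers q))
        rw [hq1, map_one]
      calc N.index = Nat.card (G ⧸ N) := Subgroup.index_eq_card N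
        _ = Nat.card Abar * Abar.index := (Subgroup.card_mul_index Abar).symm
        _ ∣ p ^ k * p ^ e := mul_dvd_mul hcardAbar hAbarindex
        _ = p ^ (k + e) := (pow_add p k e).symm
    apply hno
    refine ⟨N, hNnorm, ?_, ?_⟩
    · intro r hr hrd
      refine ⟨hr, ?_⟩
      rintro rfl
      exact hpN hrd
    · intro r hr hrd
      have h1 : r ∣ p ^ (k + e) := hrd.trans hindex
      have h2 : r = p := (Nat.prime_dvd_prime_iff_eq hr hp).mp (hr.dvd_of_dvd_pow h1)
      simp only [Set.mem_setOf_eq]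
      exact fun hmem => hmem.2 h2
  · -- Case: p does not divide m - 1
    have hcop : IsCoprime ((p ^ k : ℕ) : ℤ) (m - 1) := by
      have h : IsCoprime ((p:ℤ)^k) (m - 1) := (int_coprime_of_prime_not_dvd hp hcase).pow_left
      rwa [← Nat.cast_pow] at h
    have hG'A : commutator G ≤ A := by
      rw [commutator_def, Subgroup.commutator_le]
      intro g1 _ g2 _
      obtain ⟨a1, ha1, b1, hb1, rfl⟩ := hfac g1
      obtain ⟨a2, ha2, b2, hb2, rfl⟩ := hfac g2
      obtain ⟨z1, hz1⟩ := Subgroup.mem_zpowers_iff.mp (by rw [hBz] at hb1; exact hb1)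
      obtain ⟨z2, hz2⟩ := Subgroup.mem_zpowers_iff.mp (by rw [hBz] at hb2; exact hb2)
      have key : QuotientGroup.mk' A ⁅a1 * b1, a2 * b2⁆ = 1 := by
        rw [map_commutatorElement]
        have ha1' : QuotientGroup.mk' A a1 = 1 := (QuotientGroup.eq_one_iff a1).mpr ha1
        have ha2' : QuotientGroup.mk' A a2 = 1 := (QuotientGroup.eq_one_iff a2).mpr ha2
        have h1 : QuotientGroup.mk' A (a1 * b1) = (QuotientGroup.mk' A b0) ^ z1 := by
          rw [map_mul, ha1', one_mul, ← hz1, map_zpow]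
        have h2 : QuotientGroup.mk' A (a2 * b2) = (QuotientGroup.mk' A b0) ^ z2 := by
          rw [map_mul, ha2', one_mul, ← hz2, map_zpow]
        rw [h1, h2, commutatorElement_eq_one_iff_commute]
        exact Commute.zpow_zpow (Commute.refl _) z1 z2
      exact (QuotientGroup.eq_one_iff _).mp key
    have hxG' : ∀ i : ℤ, x ^ i ∈ commutator G := by
      intro i
      obtain ⟨u, v, huv⟩ := hcop
      have hkey : ⁅x ^ (-(v * i)), q⁆ = x ^ i := by
        have h2 : ⁅x ^ (-(v * i)), q⁆ = x ^ (-(v * i)) * (q * x ^ (-(-(v * i))) * q⁻¹) := by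
          rw [commutatorElement_def, ← zpow_neg]
          group
        rw [h2, hconj, ← zpow_add]
        have hexp : -(v * i) + m * -(-(v * i)) = i - ((p ^ k : ℕ) : ℤ) * (i * u) := by
          linear_combination i * huv
        rw [hexp, zpow_sub, zpow_mul, hxpk, one_zpow]
        simp
      rw [← hkey]
      exact Subgroup.commutator_mem_commutator (Subgroup.mem_top _) (Subgroup.mem_top _)
    have hinj : ∀ i : ℤ, x ^ (i * (m - 1)) = 1 → x ^ i = 1 := by
      intro i hi
      have h1 : ((p ^ k : ℕ) : ℤ) ∣ i * (m - 1) := by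
        have := orderOf_dvd_iff_zpow_eq_one.mpr hi
        rwa [hox] at this
      obtain ⟨d, rfl⟩ := hcop.dvd_of_dvd_mul_right h1
      rw [zpow_mul, hxpk, one_zpow]
    constructor
    · ext g
      simp only [Set.mem_setOf_eq]
      constructor
      · rintro ⟨hgc, hord⟩
        exact ⟨hG'A hgc, hord⟩
      · rintro ⟨hgA, hord⟩
        refine ⟨?_, hord⟩
        obtain ⟨i, hi⟩ := Subgroup.mem_zpowers_iff.mp (hPmem g hgA hord)
        rw [← hi]
        exact hxG' i
    · intro g hgA hgB hord
      obtain ⟨i, hi⟩ := Subgroup.mem_zpowers_iff.mp (hPmem g hgA hord)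
      obtain ⟨z, hz⟩ := Subgroup.mem_zpowers_iff.mp (by rw [hBz] at hgB; exact hgB)
      have hcomm : q * g * q⁻¹ = g := by
        rw [← hz]
        have hc : Commute q (b0 ^ z) := Commute.zpow_right (Commute.pow_left (Commute.refl b0) (p ^ e)) z
        rw [hc.eq, mul_assoc]
        simp
      have hx2 : x ^ (m * i) = x ^ i := by
        rw [← hconj, hi, hcomm]
      have h3 : x ^ (i * (m - 1)) = 1 := by
        rw [mul_sub, mul_one, zpow_sub, mul_comm i m, hx2]
        simp
      rw [← hi]
      exact hinj i h3
end

section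
/- Let G be a finite group, A a normal cyclic subgroup of G of order m with G/A cyclic, and let p be a prime dividing m. Let C be the unique subgroup of A of order p. Then G has a normal Hall p'-subgroup if and only if C is contained in the center of G. -/
section HallAux
open Subgroup

lemma cyclic_card_inj {α : Type*} [Group α] [Finite α] [IsCyclic α]
    (H₁ H₂ : Subgroup α) (h : Nat.card H₁ = Nat.card H₂) : H₁ = H₂ := by
  classical
  have := Fintype.ofFinite α
  set d := Nat.card H₁ with hd
  have hd0 : 0 < d := Nat.card_pos
  have key : ∀ H : Subgroup α, Nat.card H = d →
      (H : Set α).toFinset = Finset.univ.filter (fun a : α => a ^ d = 1) := by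
    intro H hH
    apply Finset.eq_of_subset_of_card_le
    · intro x hx
      simp only [Set.mem_toFinset, SetLike.mem_coe] at hx
      simp only [Finset.mem_filter, Finset.mem_univ, true_and]
      have : (⟨x, hx⟩ : H) ^ d = 1 := by
        rw [← hH]; exact pow_card_eq_one'
      simpa using congrArg (Subtype.val) this
    · calc (Finset.univ.filter (fun a : α => a ^ d = 1)).card ≤ d :=
            IsCyclic.card_pow_eq_one_le hd0
        _ = (H : Set α).toFinset.card := by
            rw [Set.toFinset_card, ← Nat.card_eq_fintype_card, ← hH]
            rfl
  have := (key H₁ rfl).trans (key H₂ h.symm).symm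
  ext x
  constructor <;> intro hx <;>
    [skip; skip] <;>
  · have : ((H₁ : Set α).toFinset : Finset α) = (H₂ : Set α).toFinset := (key H₁ rfl).trans (key H₂ h.symm).symm
    first
    | (have hx' : x ∈ (H₁ : Set α).toFinset := by simpa using hx
       rw [this] at hx'; simpa using hx')
    | (have hx' : x ∈ (H₂ : Set α).toFinset := by simpa using hx
       rw [← this] at hx'; simpa using hx')

lemma eq_of_le_cyclic {G : Type*} [Group G] [Finite G] {A : Subgroup G} (hcA : IsCyclic A)
    {H₁ H₂ : Subgroup G} (h₁ : H₁ ≤ A) (h₂ : H₂ ≤ A)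
    (h : Nat.card H₁ = Nat.card H₂) : H₁ = H₂ := by
  have e₁ := Subgroup.subgroupOfEquivOfLe h₁
  have e₂ := Subgroup.subgroupOfEquivOfLe h₂
  have : H₁.subgroupOf A = H₂.subgroupOf A := by
    apply cyclic_card_inj
    rw [Nat.card_congr e₁.toEquiv, Nat.card_congr e₂.toEquiv, h]
  have k₁ := Subgroup.subgroupOf_map_subtype H₁ A
  have k₂ := Subgroup.subgroupOf_map_subtype H₂ A
  rw [inf_eq_left.mpr h₁] at k₁
  rw [inf_eq_left.mpr h₂] at k₂
  rw [← k₁, ← k₂, this]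


lemma normal_of_le_cyclic {G : Type*} [Group G] [Finite G] {A : Subgroup G} (hA : A.Normal)
    (hcA : IsCyclic A) {H : Subgroup G} (hH : H ≤ A) : H.Normal := by
  constructor
  intro n hn g
  have : H.map (MulAut.conj g).toMonoidHom = H := by
    apply eq_of_le_cyclic hcA _ hH
    · exact Nat.card_congr (Subgroup.equivMapOfInjective H _ (MulAut.conj g).injective).toEquiv.symm
    · intro x hx
      obtain ⟨y, hy, rfl⟩ := hx
      exact hA.conj_mem y (hH hy) g
  rw [← this]
  exact ⟨n, hn, rfl⟩

lemma build_N {G : Type*} [Group G] [Finite G] (p : ℕ) (hp : p.Prime)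
    (K : Subgroup G) (hKn : K.Normal) (hcommK : ∀ x y : K, x * y = y * x)
    (hKi : ∀ q : ℕ, q.Prime → q ∣ K.index → q = p) :
    ∃ N : Subgroup G, N.Normal ∧ ¬ p ∣ Nat.card N ∧
      (∀ q : ℕ, q.Prime → q ∣ N.index → q = p) := by
  classical
  haveI : Fact p.Prime := ⟨hp⟩
  letI : CommGroup K := { (inferInstance : Group K) with mul_comm := hcommK }
  set v := (Nat.card K).factorization p with hv
  set w := p ^ v with hw
  have hKcard0 : Nat.card K ≠ 0 := Nat.card_pos.ne'
  set f : K →* G := K.subtype.comp (powMonoidHom w) with hf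
  have hker : Nat.card f.ker = w := by
    have hpg : IsPGroup p f.ker := by
      intro x
      refine ⟨v, ?_⟩
      have hx : ((x : K) : G) ^ w = 1 := x.2
      have : (x : K) ^ w = 1 := by
        apply Subtype.ext
        simpa using hx
      exact Subtype.ext this
    obtain ⟨j, hj⟩ := hpg.exists_card_eq
    have hjv : j ≤ v := by
      have h1 : p ^ j ∣ Nat.card K := by
        rw [← hj]; exact Subgroup.card_subgroup_dvd_card f.ker
      exact (Nat.Prime.pow_dvd_iff_le_factorization hp hKcard0).mp h1
    obtain ⟨P⟩ := (inferInstance : Nonempty (Sylow p K))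
    have hPcard : Nat.card P = w := by
      rw [Sylow.card_eq_multiplicity]
    have hPle : (P : Subgroup K) ≤ f.ker := by
      intro x hx
      have hord : orderOf x ∣ w := by
        rw [← hPcard]
        exact (Subgroup.orderOf_mk x hx) ▸ orderOf_dvd_natCard (⟨x, hx⟩ : P)
      have hx1 : x ^ w = 1 := orderOf_dvd_iff_pow_eq_one.mp hord
      show f x = 1
      simp only [hf, MonoidHom.comp_apply, powMonoidHom_apply]
      rw [hx1]
      exact map_one _
    have hvj : v ≤ j := by
      have : w ∣ Nat.card f.ker := hPcard ▸ Subgroup.card_dvd_of_le hPle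
      rw [hj, hw] at this
      exact (Nat.pow_dvd_pow_iff_le_right hp.one_lt).mp this
    rw [hj, hw, Nat.le_antisymm hjv hvj]
  have hcardN : Nat.card f.range * w = Nat.card K := by
    rw [← hker]
    rw [Nat.card_congr (QuotientGroup.quotientKerEquivRange f).toEquiv.symm]
    exact (Subgroup.card_eq_card_quotient_mul_card_subgroup f.ker).symm
  refine ⟨f.range, ?_, ?_, ?_⟩
  · -- normal
    constructor
    intro n hn g
    obtain ⟨y, rfl⟩ := hn
    have hy' : g * (y : G) * g⁻¹ ∈ K := hKn.conj_mem _ y.2 g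
    refine ⟨⟨g * (y : G) * g⁻¹, hy'⟩, ?_⟩
    have h1 : f ⟨g * (y : G) * g⁻¹, hy'⟩ = (g * (y : G) * g⁻¹) ^ w := rfl
    have h2 : f y = (y : G) ^ w := rfl
    have h3 : (g * (y : G) * g⁻¹) ^ w = g * (y : G) ^ w * g⁻¹ := by
      calc (g * (y : G) * g⁻¹) ^ w = (MulAut.conj g (y : G)) ^ w := by rw [MulAut.conj_apply]
        _ = MulAut.conj g ((y : G) ^ w) := by rw [map_pow]
        _ = g * (y : G) ^ w * g⁻¹ := by rw [MulAut.conj_apply]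
    rw [h1, h2, h3]
  · -- cardinality
    have hN : Nat.card f.range = ordCompl[p] (Nat.card K) := by
      have h1 : Nat.card K / w = Nat.card f.range :=
        Nat.div_eq_of_eq_mul_left (pow_pos hp.pos v) hcardN.symm
      rw [← h1, hw, hv]
    rw [hN]
    exact Nat.not_dvd_ordCompl hp (by exact hKcard0)
  · -- index
    intro q hq hqd
    have hle : f.range ≤ K := by
      rintro x ⟨y, rfl⟩; exact Subgroup.pow_mem K y.2 w
    have h1 : (f.range).relIndex K * K.index = (f.range).index :=
      Subgroup.relIndex_mul_index hle
    have h3 : Nat.card ((f.range).subgroupOf K) = Nat.card f.range :=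
      Nat.card_congr (Subgroup.subgroupOfEquivOfLe hle).toEquiv
    have h4 : Nat.card f.range * (f.range).relIndex K = Nat.card K := by
      rw [← h3]
      exact Subgroup.card_mul_index ((f.range).subgroupOf K)
    have h5 : (f.range).relIndex K = w := by
      have hpos : 0 < Nat.card f.range := Nat.card_pos
      exact Nat.eq_of_mul_eq_mul_left hpos (h4.trans hcardN.symm)
    rw [← h1, h5] at hqd
    rcases (Nat.Prime.dvd_mul hq).mp hqd with h | h
    · exact Nat.prime_dvd_prime_iff_eq hq hp |>.mp (hq.dvd_of_dvd_pow (hw ▸ h))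
    · exact hKi q hq h

lemma aux_pcase {G : Type*} [Group G] [Finite G] (A : Subgroup G) (hA : A.Normal)
    (hcA : IsCyclic A) (hq : IsCyclic (G ⧸ A)) (p b : ℕ) (hp : p.Prime)
    (hcard : Nat.card A = p ^ (b + 1))
    (C : Subgroup G) (hCA : C ≤ A) (hC : Nat.card C = p) (hcen : C ≤ Subgroup.center G) :
    ∃ N : Subgroup G, N.Normal ∧ ¬ p ∣ Nat.card N ∧
      (∀ q : ℕ, q.Prime → q ∣ N.index → q = p) := by
  classical
  haveI : Fact p.Prime := ⟨hp⟩
  -- generator of A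
  obtain ⟨⟨z, hzA⟩, hgen⟩ := hcA
  have hmem : ∀ x ∈ A, ∃ k : ℤ, z ^ k = x := by
    intro x hx
    obtain ⟨k, hk⟩ := Subgroup.mem_zpowers_iff.mp (hgen ⟨x, hx⟩)
    exact ⟨k, by simpa using congrArg Subtype.val hk⟩
  have hordz : orderOf z = p ^ (b + 1) := by
    have h1 : orderOf (⟨z, hzA⟩ : A) = Nat.card A :=
      orderOf_eq_card_of_forall_mem_zpowers hgen
    rw [← Subgroup.orderOf_mk z hzA, h1, hcard]
  -- the centralizer of A
  set K := Subgroup.centralizer (A : Set G) with hK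
  have hAK : A ≤ K := by
    intro x hx
    rw [Subgroup.mem_centralizer_iff]
    intro h hh
    obtain ⟨k, rfl⟩ := hmem x hx
    obtain ⟨l, rfl⟩ := hmem h hh
    rw [← zpow_add, ← zpow_add, add_comm]
  have hKn : K.Normal := by
    constructor
    intro n hn g
    rw [Subgroup.mem_centralizer_iff] at hn ⊢
    intro h hh
    have h' : g⁻¹ * h * g ∈ A := by
      have := hA.conj_mem h hh g⁻¹
      simpa using this
    have hcomm := hn _ h'
    calc h * (g * n * g⁻¹) = g * ((g⁻¹ * h * g) * n) * g⁻¹ := by group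
      _ = g * (n * (g⁻¹ * h * g)) * g⁻¹ := by rw [hcomm]
      _ = (g * n * g⁻¹) * h := by group
  -- K is abelian
  have hcommK : ∀ x y : K, x * y = y * x := by
    haveI := hq
    apply commutative_of_cyclic_center_quotient ((QuotientGroup.mk' A).comp K.subtype)
    intro x hx
    have hxA : (x : G) ∈ A := by
      rwa [MonoidHom.mem_ker, MonoidHom.comp_apply, QuotientGroup.mk'_apply,
        QuotientGroup.eq_one_iff] at hx
    rw [Subgroup.mem_center_iff]
    intro y
    have := Subgroup.mem_centralizer_iff.mp y.2 (x : G) hxA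
    exact Subtype.ext (by simpa using this.symm)
  -- index of K is a power of p
  have hpgq : IsPGroup p (G ⧸ K) := by
    intro x
    obtain ⟨g, rfl⟩ := QuotientGroup.mk_surjective x
    refine ⟨b, ?_⟩
    rw [← QuotientGroup.mk_pow, QuotientGroup.eq_one_iff]
    -- show g ^ (p ^ b) centralizes A
    obtain ⟨u, hu⟩ := hmem (g * z * g⁻¹) (hA.conj_mem z hzA g)
    -- u ≡ 1 mod p
    have hc' : Subgroup.zpowers (z ^ (p ^ b : ℕ)) = C := by
      apply eq_of_le_cyclic ⟨⟨z, hzA⟩, hgen⟩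
      · rw [Subgroup.zpowers_le]; exact A.pow_mem hzA _
      · exact hCA
      · rw [Nat.card_zpowers, hC, orderOf_pow, hordz]
        rw [Nat.gcd_eq_right (pow_dvd_pow p (Nat.le_succ b)), pow_succ,
          Nat.mul_div_cancel_left _ (pow_pos hp.pos b)]
    have hc'cen : z ^ (p ^ b : ℕ) ∈ Subgroup.center G :=
      hcen (hc' ▸ Subgroup.mem_zpowers _)
    have hconj : g * z ^ (p ^ b : ℕ) * g⁻¹ = z ^ (p ^ b : ℕ) := by
      have := (Subgroup.mem_center_iff.mp hc'cen g).symm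
      rw [← this]; group
    have h1 : g * z ^ (p ^ b : ℕ) * g⁻¹ = (g * z * g⁻¹) ^ (p ^ b : ℕ) := by
      rw [← MulAut.conj_apply, map_pow, MulAut.conj_apply]
    have hzu : z ^ (u * ((p ^ b : ℕ) : ℤ)) = z ^ (((p ^ b : ℕ)) : ℤ) := by
      calc z ^ (u * ((p ^ b : ℕ) : ℤ)) = (z ^ u) ^ ((p ^ b : ℕ) : ℤ) := by rw [zpow_mul]
        _ = (g * z * g⁻¹) ^ ((p ^ b : ℕ) : ℤ) := by rw [hu]
        _ = (g * z * g⁻¹) ^ (p ^ b : ℕ) := by rw [zpow_natCast]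
        _ = g * z ^ (p ^ b : ℕ) * g⁻¹ := h1.symm
        _ = z ^ (p ^ b : ℕ) := hconj
        _ = z ^ (((p ^ b : ℕ)) : ℤ) := (zpow_natCast _ _).symm
    have hdvd1 : ((p : ℤ)) ∣ u - 1 := by
      have := zpow_eq_zpow_iff_modEq.mp hzu
      rw [hordz, Int.ModEq] at this
      have hd : ((p : ℤ)) ^ (b + 1) ∣ u * (p ^ b : ℕ) - (p ^ b : ℕ) := by
        exact_mod_cast Int.ModEq.dvd this.symm
      have : ((p : ℤ)) * (p : ℤ) ^ b ∣ (u - 1) * (p : ℤ) ^ b := by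
        rw [sub_mul, one_mul]
        push_cast at hd ⊢
        convert hd using 2
        ring
      exact (mul_dvd_mul_iff_right (pow_ne_zero b (by exact_mod_cast hp.pos.ne') : ((p:ℤ)) ^ b ≠ 0)).mp this
    have hdvd2 : ((p : ℤ)) ^ (b + 1) ∣ u ^ (p ^ b) - 1 := by
      have := dvd_sub_pow_of_dvd_sub (a := u) (b := 1) (p := p) (by simpa using hdvd1) b
      simpa using this
    have keypow : ∀ n : ℕ, g ^ n * z * (g ^ n)⁻¹ = z ^ (u ^ n) := by
      intro n
      induction n with
      | zero => simp
      | succ n ih =>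
        have h1 : g ^ (n+1) * z * (g ^ (n+1))⁻¹ = g * (g ^ n * z * (g ^ n)⁻¹) * g⁻¹ := by group
        have h2 : g * z ^ (u ^ n) * g⁻¹ = (g * z * g⁻¹) ^ (u ^ n) := by
          rw [← MulAut.conj_apply, map_zpow, MulAut.conj_apply]
        rw [h1, ih, h2, ← hu, ← zpow_mul, pow_succ, mul_comm (u ^ n) u]
    have hfix : g ^ (p ^ b) * z * (g ^ (p ^ b))⁻¹ = z := by
      rw [keypow]
      have hmodeq : u ^ (p ^ b) ≡ 1 [ZMOD ((p:ℤ) ^ (b+1))] :=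
        (Int.ModEq.symm (Int.modEq_iff_dvd.mpr hdvd2))
      have : z ^ (u ^ (p ^ b)) = z ^ (1 : ℤ) := by
        apply zpow_eq_zpow_iff_modEq.mpr
        rw [hordz]
        exact_mod_cast hmodeq
      simpa using this
    rw [Subgroup.mem_centralizer_iff]
    intro h hh
    obtain ⟨k, rfl⟩ := hmem h hh
    have hcz : Commute (g ^ (p ^ b)) z := by
      have : g ^ (p ^ b) * z = z * g ^ (p ^ b) := by
        calc g ^ (p ^ b) * z = (g ^ (p ^ b) * z * (g ^ (p ^ b))⁻¹) * g ^ (p ^ b) := by group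
          _ = z * g ^ (p ^ b) := by rw [hfix]
      exact this
    exact ((hcz.zpow_right k).symm).eq
  -- conclude: index of K is a p-power
  have hKi : ∀ q : ℕ, q.Prime → q ∣ K.index → q = p := by
    intro q hq hqd
    obtain ⟨n, hn⟩ := hpgq.exists_card_eq
    rw [Subgroup.index_eq_card, hn] at hqd
    exact (Nat.prime_dvd_prime_iff_eq hq hp).mp (hq.dvd_of_dvd_pow hqd)
  exact build_N p hp K hKn hcommK hKi

lemma forward_dir {G : Type*} [Group G] [Finite G] (A : Subgroup G) (hA : A.Normal)
    (hcA : IsCyclic A)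
    (p : ℕ) (hp : p.Prime)
    (C : Subgroup G) (hCA : C ≤ A) (hC : Nat.card C = p)
    (N : Subgroup G) (hNn : N.Normal) (hall : IsHallSubgroup {q : ℕ | q.Prime ∧ q ≠ p} N) :
    C ≤ Subgroup.center G := by
  haveI : Fact p.Prime := ⟨hp⟩
  have hCn : C.Normal := normal_of_le_cyclic hA hcA hCA
  -- p does not divide card N
  have hpN : ¬ p ∣ Nat.card N := fun hdvd => (hall.1 p hp hdvd).2 rfl
  -- index N = p ^ e
  have hidx0 : N.index ≠ 0 := Subgroup.index_ne_zero_of_finite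
  obtain ⟨e, he⟩ : ∃ e, N.index = p ^ e := by
    refine ⟨_, Nat.eq_prime_pow_of_unique_prime_dvd hidx0 ?_⟩
    intro q hq hqd
    by_contra hne
    exact (hall.2 q hq hqd) ⟨hq, hne⟩
  -- Disjoint N C
  have hbot : N ⊓ C = ⊥ := by
    have hcard : Nat.card ↥(N ⊓ C) ∣ p := by
      rw [← hC]; exact Subgroup.card_dvd_of_le inf_le_right
    rcases (Nat.dvd_prime hp).mp hcard with h1 | hpp
    · exact Subgroup.card_eq_one.mp h1
    · exfalso
      have hle : C ≤ N := by
        have : N ⊓ C = C := Subgroup.eq_of_le_of_card_ge inf_le_right (by rw [hpp, hC])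
        rw [← this]; exact inf_le_left
      exact hpN (hC ▸ Subgroup.card_dvd_of_le hle)
  -- main
  intro c hc
  rw [Subgroup.mem_center_iff]
  intro g
  rcases eq_or_ne c 1 with rfl | hc1
  · simp
  have hoc : orderOf c = p := by
    have h1 : orderOf (⟨c, hc⟩ : C) ∣ p := hC ▸ orderOf_dvd_natCard _
    have h2 : orderOf (⟨c, hc⟩ : C) = orderOf c := Subgroup.orderOf_mk c hc
    rcases (Nat.dvd_prime hp).mp h1 with h | h
    · exact absurd (orderOf_eq_one_iff.mp (h2 ▸ h)) hc1
    · exact h2 ▸ h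
  have hzC : Subgroup.zpowers c = C :=
    Subgroup.eq_of_le_of_card_ge ((Subgroup.zpowers_le).mpr hc)
      (by rw [Nat.card_zpowers, hoc, hC])
  -- conjugate
  obtain ⟨u, hu⟩ : ∃ u : ℤ, c ^ u = g * c * g⁻¹ := by
    have : g * c * g⁻¹ ∈ C := hCn.conj_mem c hc g
    rw [← hzC] at this
    exact Subgroup.mem_zpowers_iff.mp this
  have keypow : ∀ n : ℕ, g ^ n * c * (g ^ n)⁻¹ = c ^ (u ^ n) := by
    intro n
    induction n with
    | zero => simp
    | succ n ih =>
      have : g ^ (n+1) * c * (g ^ (n+1))⁻¹ = g * (g ^ n * c * (g ^ n)⁻¹) * g⁻¹ := by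
        group
      rw [this, ih]
      have : g * c ^ (u ^ n) * g⁻¹ = (g * c * g⁻¹) ^ (u ^ n) := by
        rw [← MulAut.conj_apply, map_zpow, MulAut.conj_apply]
      rw [this, ← hu, ← zpow_mul, pow_succ, mul_comm (u ^ n) u]
  -- g ^ index ∈ N
  have hgN : g ^ N.index ∈ N := Subgroup.pow_index_mem N g
  have hcomm : g ^ N.index * c * (g ^ N.index)⁻¹ = c := by
    have := Subgroup.commute_of_normal_of_disjoint N C hNn hCn
      (disjoint_iff.mpr hbot) _ _ hgN hc
    rw [this.eq]; group
  have hck : c ^ (u ^ N.index) = c := by rw [← keypow, hcomm]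
  -- so p ∣ u ^ (p^e) - 1
  have h1 : ((p : ℤ)) ∣ u ^ N.index - 1 := by
    rw [← hoc]
    rw [orderOf_dvd_iff_zpow_eq_one]
    rw [zpow_sub, hck, zpow_one, mul_inv_cancel]
  -- Fermat: u^(p^e) = u in ZMod p
  have h2' : ∀ k : ℕ, ((u : ZMod p)) ^ (p ^ k) = (u : ZMod p) := by
    intro k
    induction k with
    | zero => simp
    | succ k ih => rw [pow_succ, pow_mul, ih, ZMod.pow_card]
  have h2 : ((u : ZMod p)) ^ N.index = (u : ZMod p) := by rw [he]; exact h2' e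
  have h3 : ((p : ℤ)) ∣ u - 1 := by
    have : ((u ^ N.index : ℤ) : ZMod p) = 1 := by
      have := (ZMod.intCast_zmod_eq_zero_iff_dvd _ p).mpr h1
      push_cast at this ⊢
      linear_combination this
    rw [← (ZMod.intCast_zmod_eq_zero_iff_dvd _ p)]
    push_cast
    push_cast at this
    rw [h2] at this
    linear_combination this
  have : c ^ u = c := by
    have : c ^ (u - 1) = 1 := by
      rw [← orderOf_dvd_iff_zpow_eq_one, hoc]; exact_mod_cast h3
    calc c ^ u = c ^ (u - 1) * c ^ (1:ℤ) := by rw [← zpow_add]; ring_nf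
    _ = c := by rw [this, one_mul, zpow_one]
  have : g * c * g⁻¹ = c := by rw [← hu, this]
  calc g * c = (g * c * g⁻¹) * g := by group
  _ = c * g := by rw [this]

lemma reverse_dir {G : Type*} [Group G] [Finite G] (A : Subgroup G) (hA : A.Normal)
    (hcA : IsCyclic A) (hq : IsCyclic (G ⧸ A))
    (p : ℕ) (hp : p.Prime) (hpm : p ∣ Nat.card A)
    (C : Subgroup G) (hCA : C ≤ A) (hC : Nat.card C = p) (hcen : C ≤ Subgroup.center G) :
    ∃ N : Subgroup G, N.Normal ∧ ¬ p ∣ Nat.card N ∧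
      (∀ q : ℕ, q.Prime → q ∣ N.index → q = p) := by
  classical
  haveI : Fact p.Prime := ⟨hp⟩
  set m := Nat.card A with hm
  have hm0 : m ≠ 0 := Nat.card_pos.ne'
  set a := m.factorization p with ha
  have ha1 : 1 ≤ a := (Nat.Prime.dvd_iff_one_le_factorization hp hm0).mp hpm
  -- generator of A
  obtain ⟨⟨z, hzA⟩, hgen⟩ := hcA
  have hordz : orderOf z = m := by
    have h1 : orderOf (⟨z, hzA⟩ : A) = Nat.card A :=
      orderOf_eq_card_of_forall_mem_zpowers hgen
    rw [← Subgroup.orderOf_mk z hzA, h1]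
  -- the p'-Hall subgroup B of A
  set B := Subgroup.zpowers (z ^ (p ^ a : ℕ)) with hB
  have hBA : B ≤ A := by rw [hB, Subgroup.zpowers_le]; exact A.pow_mem hzA _
  have hBcard : Nat.card B = ordCompl[p] m := by
    rw [hB, Nat.card_zpowers, orderOf_pow, hordz,
      Nat.gcd_eq_right (Nat.ordProj_dvd m p)]
  have hpB : ¬ p ∣ Nat.card B := by
    rw [hBcard]; exact Nat.not_dvd_ordCompl hp hm0
  have hBn : B.Normal := normal_of_le_cyclic hA ⟨⟨z, hzA⟩, hgen⟩ hBA
  -- pass to the quotient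
  set π := QuotientGroup.mk' B with hπ
  have hπs : Function.Surjective π := QuotientGroup.mk'_surjective B
  have hπker : π.ker = B := QuotientGroup.ker_mk' B
  set Abar := A.map π with hAbar
  have hAbarn : Abar.Normal := hA.map π hπs
  have hAbarc : IsCyclic Abar := by
    haveI : IsCyclic A := ⟨⟨z, hzA⟩, hgen⟩
    exact isCyclic_of_surjective (π.subgroupMap A) (π.subgroupMap_surjective A)
  -- generic cardinality fact for images
  have cardmap : ∀ H : Subgroup G, B ≤ H → Nat.card (H.map π) * Nat.card B = Nat.card H := by
    intro H hBH
    set f := π.comp H.subtype with hfd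
    have hrange : f.range = H.map π := by
      ext x
      simp [hfd, Subgroup.mem_map, MonoidHom.mem_range]
    have hker : f.ker = B.subgroupOf H := by
      ext x
      exact (MonoidHom.mem_ker (f := f)).trans
        (((MonoidHom.mem_ker (f := π)).symm.trans (SetLike.ext_iff.mp hπker ((x : G)))).trans
          (Subgroup.mem_subgroupOf).symm)
    have h1 : Nat.card H = Nat.card (H ⧸ f.ker) * Nat.card f.ker :=
      Subgroup.card_eq_card_quotient_mul_card_subgroup f.ker
    have h2 : Nat.card (H ⧸ f.ker) = Nat.card (H.map π) := by
      rw [← hrange]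
      exact Nat.card_congr (QuotientGroup.quotientKerEquivRange f).toEquiv
    have h3 : Nat.card f.ker = Nat.card B := by
      rw [hker]
      exact Nat.card_congr (Subgroup.subgroupOfEquivOfLe hBH).toEquiv
    rw [h1, h2, h3]
  have hAbarcard : Nat.card Abar = p ^ a := by
    have h1 := cardmap A hBA
    rw [hBcard, ← hm] at h1
    have h2 : p ^ a * ordCompl[p] m = m := Nat.ordProj_mul_ordCompl_eq_self m p
    have h3 : 0 < ordCompl[p] m := Nat.ordCompl_pos p hm0
    rw [hAbar]
    nlinarith [h1, h2, h3]
  -- C maps isomorphically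
  set Cbar := C.map π with hCbar
  have hCBbot : C ⊓ B = ⊥ := by
    have hd : Nat.card ↥(C ⊓ B) ∣ p := hC ▸ Subgroup.card_dvd_of_le inf_le_left
    rcases (Nat.dvd_prime hp).mp hd with h1 | h1
    · exact Subgroup.card_eq_one.mp h1
    · exfalso
      apply hpB
      rw [← h1]
      exact Subgroup.card_dvd_of_le inf_le_right
  have hCbarcard : Nat.card Cbar = p := by
    set f := π.comp C.subtype with hfd
    have hrange : f.range = C.map π := by
      ext x
      simp [hfd, Subgroup.mem_map, MonoidHom.mem_range]
    have hker : f.ker = ⊥ := by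
      rw [eq_bot_iff]
      intro x hx
      have hx' : (x : G) ∈ B := by
        rw [← hπker]
        exact hx
      have : (x : G) ∈ C ⊓ B := ⟨x.2, hx'⟩
      rw [hCBbot] at this
      exact Subgroup.mem_bot.mpr (Subtype.ext (Subgroup.mem_bot.mp this))
    have h1 : Nat.card C = Nat.card (C ⧸ f.ker) * Nat.card f.ker :=
      Subgroup.card_eq_card_quotient_mul_card_subgroup f.ker
    have h2 : Nat.card (C ⧸ f.ker) = Nat.card Cbar := by
      rw [hCbar, ← hrange]
      exact Nat.card_congr (QuotientGroup.quotientKerEquivRange f).toEquiv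
    have h3 : Nat.card f.ker = 1 := by rw [hker]; simp
    rw [← hC, h1, h2, h3, mul_one]
  have hCbarA : Cbar ≤ Abar := Subgroup.map_mono hCA
  have hCbarcen : Cbar ≤ Subgroup.center (G ⧸ B) := by
    rintro x ⟨c, hc, rfl⟩
    rw [Subgroup.mem_center_iff]
    intro y
    obtain ⟨g, rfl⟩ := hπs y
    rw [← map_mul, ← map_mul]
    congr 1
    exact (Subgroup.mem_center_iff.mp (hcen hc) g)
  -- the quotient by Abar is cyclic
  have hqbar : IsCyclic ((G ⧸ B) ⧸ Abar) := by
    haveI := hq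
    have hle : A ≤ ((QuotientGroup.mk' Abar).comp π).ker := by
      intro x hx
      rw [MonoidHom.mem_ker, MonoidHom.comp_apply, QuotientGroup.mk'_apply,
        QuotientGroup.eq_one_iff]
      exact ⟨x, hx, rfl⟩
    have hsurj : Function.Surjective
        (QuotientGroup.lift A ((QuotientGroup.mk' Abar).comp π)
          (fun x hx => MonoidHom.mem_ker.mp (hle hx))) := by
      intro y
      obtain ⟨g, rfl⟩ := (QuotientGroup.mk'_surjective Abar).comp hπs y
      exact ⟨QuotientGroup.mk g, rfl⟩
    exact isCyclic_of_surjective _ hsurj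
  -- apply the p-group case
  obtain ⟨b, hb⟩ : ∃ b, a = b + 1 := ⟨a - 1, (Nat.succ_pred_eq_of_pos ha1).symm⟩
  obtain ⟨Nbar, hNbarn, hNbarp, hNbari⟩ :=
    aux_pcase Abar hAbarn hAbarc hqbar p b hp (by rw [hAbarcard, hb]) Cbar hCbarA
      hCbarcard hCbarcen
  refine ⟨Nbar.comap π, hNbarn.comap π, ?_, ?_⟩
  · have hBN : B ≤ Nbar.comap π := by
      intro x hx
      have : π x = 1 := by rw [← MonoidHom.mem_ker, hπker]; exact hx
      rw [Subgroup.mem_comap, this]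
      exact Nbar.one_mem
    have h1 := cardmap (Nbar.comap π) hBN
    have h2 : (Nbar.comap π).map π = Nbar := Subgroup.map_comap_eq_self_of_surjective hπs Nbar
    rw [h2] at h1
    rw [← h1]
    intro hcon
    rcases (Nat.Prime.dvd_mul hp).mp hcon with h | h
    · exact hNbarp h
    · exact hpB h
  · intro q hqp hqd
    rw [Subgroup.index_comap_of_surjective _ hπs] at hqd
    exact hNbari q hqp hqd

theorem stmt11 {G : Type*} [Group G] [Finite G] (A : Subgroup G) (hA : A.Normal)
    (hcA : IsCyclic A) (hq : IsCyclic (G ⧸ A))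
    (p : ℕ) (hp : p.Prime) (hpm : p ∣ Nat.card A)
    (C : Subgroup G) (hCA : C ≤ A) (hC : Nat.card C = p) :
    (∃ N : Subgroup G, N.Normal ∧ IsHallSubgroup {q : ℕ | q.Prime ∧ q ≠ p} N) ↔
      C ≤ Subgroup.center G := by
  constructor
  · rintro ⟨N, hNn, hall⟩
    exact forward_dir A hA hcA p hp C hCA hC N hNn hall
  · intro hcen
    obtain ⟨N, hNn, hNp, hNi⟩ := reverse_dir A hA hcA hq p hp hpm C hCA hC hcen
    refine ⟨N, hNn, ?_, ?_⟩
    · intro q hqp hqd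
      exact ⟨hqp, fun h => hNp (h ▸ hqd)⟩
    · rintro q hqp hqd ⟨_, hne⟩
      exact hne (hNi q hqp hqd)

end HallAux
end

section
/- Let m, n, s be positive integers with s dividing m, and let t be an integer coprime to m such that m divides s(t-1) and m divides t^n - 1. Then the group G = ⟨a, b | a^m = 1, b^n = a^s, b^{-1}ab = a^t⟩ has order m·n, the element a has order m, and the element b has order m·n/s. -/
set_option linter.unusedSectionVars false

/-- Carrier for the concrete metacyclic group model. `u` is the inverse of `t` mod `m`. -/
structure MC (m n s : ℕ) (u : ZMod m) where
  i : ZMod m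
  j : ZMod n

namespace MC

variable {m n s : ℕ} {u : ZMod m}

instance : Mul (MC m n s u) :=
  ⟨fun x y => ⟨x.i + u ^ x.j.val * y.i + ((s * ((x.j.val + y.j.val) / n) : ℕ) : ZMod m),
    x.j + y.j⟩⟩

instance : One (MC m n s u) := ⟨⟨0, 0⟩⟩

instance : Inv (MC m n s u) :=
  ⟨fun x => ⟨-(u ^ (-x.j).val * x.i) - ((s * (((-x.j).val + x.j.val) / n) : ℕ) : ZMod m), -x.j⟩⟩

@[simp] theorem mul_i (x y : MC m n s u) :
    (x * y).i = x.i + u ^ x.j.val * y.i + ((s * ((x.j.val + y.j.val) / n) : ℕ) : ZMod m) := rfl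
@[simp] theorem mul_j (x y : MC m n s u) : (x * y).j = x.j + y.j := rfl
@[simp] theorem one_i : (1 : MC m n s u).i = 0 := rfl
@[simp] theorem one_j : (1 : MC m n s u).j = 0 := rfl
@[simp] theorem inv_i (x : MC m n s u) :
    (x⁻¹).i = -(u ^ (-x.j).val * x.i) - ((s * (((-x.j).val + x.j.val) / n) : ℕ) : ZMod m) := rfl
@[simp] theorem inv_j (x : MC m n s u) : (x⁻¹).j = -x.j := rfl

theorem ext {x y : MC m n s u} (hi : x.i = y.i) (hj : x.j = y.j) : x = y := by
  cases x; cases y; simp_all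

/-- carry lemma -/
theorem carry (hn : 0 < n) (a b : ℕ) : (a + b) / n = a / n + (a % n + b) / n := by
  conv_lhs => rw [show a + b = n * (a / n) + (a % n + b) by
    have := Nat.div_add_mod a n; omega]
  rw [Nat.mul_add_div hn]

theorem carry' (hn : 0 < n) (a b : ℕ) :
    (a + b) / n = a / n + b / n + (a % n + b % n) / n := by
  have e1 := carry hn a b
  have e2 := carry hn b (a % n)
  rw [Nat.add_comm b (a % n), Nat.add_comm (b % n) (a % n)] at e2
  omega

section Group
variable (hn : 0 < n) (hu : u ^ n = 1) (hsu : (s : ZMod m) * u = (s : ZMod m))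

include hu in
theorem upow_mod (k : ℕ) : u ^ (k % n) = u ^ k := by
  conv_rhs => rw [show k = n * (k / n) + k % n by have := Nat.div_add_mod k n; omega]
  rw [pow_add, pow_mul, hu, one_pow, one_mul]

include hsu in
theorem spow (k : ℕ) : (s : ZMod m) * u ^ k = (s : ZMod m) := by
  induction k with
  | zero => simp
  | succ k ih => rw [pow_succ, ← mul_assoc, ih, hsu]

include hn hu hsu in
theorem mul_assoc' (x y z : MC m n s u) : x * y * z = x * (y * z) := by
  have : NeZero n := ⟨hn.ne'⟩
  set A := x.j.val with hA
  set B := y.j.val with hB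
  set C := z.j.val with hC
  refine ext ?_ (add_assoc _ _ _)
  simp only [mul_i, mul_j, ZMod.val_add, ← hA, ← hB, ← hC]
  have hU : u ^ ((A + B) % n) = u ^ A * u ^ B := by rw [upow_mod hu, pow_add]
  have hS : u ^ A * (s : ZMod m) = (s : ZMod m) := by rw [mul_comm]; exact spow hsu A
  have hcar : (A + B) / n + ((A + B) % n + C) / n = (B + C) / n + (A + (B + C) % n) / n := by
    have e1 := carry hn (A + B) C
    have e2 := carry hn (B + C) A
    rw [show B + C + A = A + B + C by ring, Nat.add_comm ((B + C) % n) A] at e2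
    omega
  have hcast : ((((A + B) / n : ℕ) : ZMod m) + (((A + B) % n + C) / n : ℕ))
      = (((B + C) / n : ℕ) : ZMod m) + ((A + (B + C) % n) / n : ℕ) := by
    exact_mod_cast congrArg (Nat.cast : ℕ → ZMod m) hcar
  push_cast
  linear_combination z.i * hU - ((((B + C) / n : ℕ) : ZMod m)) * hS + (s : ZMod m) * hcast

include hn in
theorem one_mul' (x : MC m n s u) : 1 * x = x := by
  have : NeZero n := ⟨hn.ne'⟩
  refine ext ?_ (zero_add _)
  simp [ZMod.val_zero, Nat.div_eq_of_lt (ZMod.val_lt x.j)]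

theorem inv_mul_cancel' (x : MC m n s u) : x⁻¹ * x = 1 := by
  refine ext ?_ (neg_add_cancel _)
  simp only [mul_i, inv_i, inv_j, one_i]
  ring

/-- The group structure, given the hypotheses. -/
@[reducible] def group (hn : 0 < n) (hu : u ^ n = 1) (hsu : (s : ZMod m) * u = (s : ZMod m)) :
    Group (MC m n s u) :=
  Group.ofLeftAxioms (mul_assoc' hn hu hsu) (one_mul' hn) inv_mul_cancel'

end Group
end MC

theorem mc_package (m n s : ℕ) (t : ℤ) (hm : 0 < m) (hn : 0 < n) (hs : s ∣ m)
    (hco : Int.gcd t m = 1) (h1 : (m : ℤ) ∣ s * (t - 1)) (h2 : (m : ℤ) ∣ t ^ n - 1) :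
    ∃ (G : Type) (_ : Group G) (a b : G),
      orderOf a = m ∧ orderOf b = m * n / s ∧
      a ^ m = 1 ∧ b ^ n = a ^ s ∧ b⁻¹ * a * b = a ^ t ∧
      Function.Injective (fun p : ZMod m × ZMod n => a ^ (p.1.val) * b ^ (p.2.val)) := by
  have hnm : NeZero m := ⟨hm.ne'⟩
  have hnn : NeZero n := ⟨hn.ne'⟩
  have spos : 0 < s := Nat.pos_of_dvd_of_pos hs hm
  -- the unit t mod m and its inverse u
  have htu' : IsCoprime (t : ℤ) (m : ℤ) := Int.isCoprime_iff_gcd_eq_one.mpr hco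
  have htunit : IsUnit ((t : ℤ) : ZMod m) := by
    have := IsCoprime.map htu' (Int.castRingHom (ZMod m))
    rw [eq_intCast, eq_intCast] at this
    rw [show (((m : ℤ)) : ZMod m) = 0 from by push_cast; exact ZMod.natCast_self m] at this
    exact (isCoprime_zero_right).mp this
  set u : ZMod m := ((htunit.unit⁻¹ : (ZMod m)ˣ) : ZMod m) with hudef
  have htu : ((t : ZMod m)) * u = 1 := by
    have h' : (htunit.unit : ZMod m) * ((htunit.unit⁻¹ : (ZMod m)ˣ) : ZMod m) = 1 := by
      exact_mod_cast htunit.unit.mul_inv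
    rwa [htunit.unit_spec] at h'
  have htn : ((t : ZMod m)) ^ n = 1 := by
    have : ((t ^ n - 1 : ℤ) : ZMod m) = 0 := by
      rw [ZMod.intCast_zmod_eq_zero_iff_dvd]; exact_mod_cast h2
    push_cast at this
    linear_combination this
  have hu : u ^ n = 1 := by
    have : (htunit.unit⁻¹ : (ZMod m)ˣ) ^ n = 1 := by
      rw [inv_pow, inv_eq_one]
      ext
      rw [Units.val_pow_eq_pow_val, htunit.unit_spec]
      exact htn
    calc u ^ n = (((htunit.unit⁻¹ : (ZMod m)ˣ) ^ n : (ZMod m)ˣ) : ZMod m) := by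
          rw [Units.val_pow_eq_pow_val]
      _ = 1 := by rw [this]; rfl
  have hst : (s : ZMod m) * (t : ZMod m) = (s : ZMod m) := by
    have : ((s * (t - 1) : ℤ) : ZMod m) = 0 := by
      rw [ZMod.intCast_zmod_eq_zero_iff_dvd]; exact_mod_cast h1
    push_cast at this
    linear_combination this
  have hsu : (s : ZMod m) * u = (s : ZMod m) := by
    calc (s : ZMod m) * u = ((s : ZMod m) * t) * u := by rw [hst]
      _ = (s : ZMod m) * ((t : ZMod m) * u) := by ring
      _ = s := by rw [htu, mul_one]
  letI : Group (MC m n s u) := MC.group hn hu hsu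
  refine ⟨MC m n s u, inferInstance, ⟨1, 0⟩, ⟨((s * (1 / n) : ℕ) : ZMod m), 1⟩, ?_⟩
  set a : MC m n s u := ⟨1, 0⟩ with ha
  set b : MC m n s u := ⟨((s * (1 / n) : ℕ) : ZMod m), 1⟩ with hb
  -- powers of a
  have apow : ∀ k : ℕ, a ^ k = ⟨(k : ZMod m), 0⟩ := by
    intro k
    induction k with
    | zero => exact MC.ext (by simp) (by simp)
    | succ k ih =>
      rw [pow_succ, ih, ha]
      refine MC.ext ?_ (by simp)
      simp [ZMod.val_zero, Nat.zero_div]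
      try push_cast
      try ring
  have ainv : ∀ c : ZMod m, (⟨c, 0⟩ : MC m n s u)⁻¹ = ⟨-c, 0⟩ := by
    intro c
    refine MC.ext ?_ (by simp)
    simp [ZMod.val_zero]
  have azpow : ∀ k : ℤ, a ^ k = ⟨((k : ℤ) : ZMod m), 0⟩ := by
    intro k
    cases k with
    | ofNat k => rw [Int.ofNat_eq_coe, zpow_natCast, apow k]; push_cast; rfl
    | negSucc k =>
      rw [zpow_negSucc, apow (k + 1), ainv]
      refine MC.ext ?_ rfl
      push_cast [Int.cast_negSucc]
      ring_nf
  -- powers of b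
  have bpow : ∀ k : ℕ, b ^ k = ⟨((s * (k / n) : ℕ) : ZMod m), (k : ZMod n)⟩ := by
    intro k
    induction k with
    | zero => exact MC.ext (by simp) (by simp)
    | succ k ih =>
      rw [pow_succ, ih, hb]
      refine MC.ext ?_ (by push_cast; simp)
      show ((s * (k / n) : ℕ) : ZMod m) + u ^ (k : ZMod n).val * ((s * (1 / n) : ℕ) : ZMod m)
          + ((s * (((k : ZMod n).val + (1 : ZMod n).val) / n) : ℕ) : ZMod m)
          = ((s * ((k + 1) / n) : ℕ) : ZMod m)
      rw [ZMod.val_natCast, show (1 : ZMod n) = ((1 : ℕ) : ZMod n) by push_cast; rfl,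
        ZMod.val_natCast, MC.upow_mod hu]
      have hnat : s * (k / n) + s * (1 / n) + s * ((k % n + 1 % n) / n) = s * ((k + 1) / n) := by
        rw [MC.carry' hn k 1]; ring
      calc ((s * (k / n) : ℕ) : ZMod m) + u ^ k * ((s * (1 / n) : ℕ) : ZMod m)
            + ((s * ((k % n + 1 % n) / n) : ℕ) : ZMod m)
          = ((s * (k / n) : ℕ) : ZMod m) + ((s : ZMod m) * u ^ k) * (((1 / n : ℕ)) : ZMod m)
            + ((s * ((k % n + 1 % n) / n) : ℕ) : ZMod m) := by push_cast; ring
        _ = ((s * (k / n) + s * (1 / n) + s * ((k % n + 1 % n) / n) : ℕ) : ZMod m) := by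
            rw [MC.spow hsu]; push_cast; ring
        _ = _ := by rw [hnat]
  -- key pairing computation
  have hpair : ∀ (i : ZMod m) (j : ZMod n), a ^ i.val * b ^ j.val = ⟨i, j⟩ := by
    intro i j
    rw [apow, bpow]
    have hv0 : (0 : ZMod n).val = 0 := ZMod.val_zero
    have hjv : ((j.val : ℕ) : ZMod n).val = j.val := by
      rw [ZMod.val_natCast, Nat.mod_eq_of_lt (ZMod.val_lt j)]
    have hdiv : j.val / n = 0 := Nat.div_eq_of_lt (ZMod.val_lt j)
    refine MC.ext ?_ ?_
    · show (i.val : ZMod m) + u ^ (0 : ZMod n).val * ((s * (j.val / n) : ℕ) : ZMod m)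
        + ((s * (((0 : ZMod n).val + ((j.val : ℕ) : ZMod n).val) / n) : ℕ) : ZMod m) = i
      rw [hv0, hjv, hdiv]
      simp [ZMod.natCast_val, ZMod.cast_id, Nat.div_eq_of_lt (ZMod.val_lt j)]
    · show (0 : ZMod n) + ((j.val : ℕ) : ZMod n) = j
      simp [ZMod.natCast_val, ZMod.cast_id]
  -- relations
  have ham : a ^ m = 1 := by
    rw [apow]
    exact MC.ext (by simp) rfl
  have hbn : b ^ n = a ^ s := by
    rw [bpow, apow]
    exact MC.ext (by rw [Nat.div_self hn, mul_one]) (by simp)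
  have hconj : b⁻¹ * a * b = a ^ t := by
    have key : a * b = b * a ^ t := by
      rw [azpow, ha, hb]
      have h1v : (1 : ZMod n).val = 1 % n := by
        rw [show (1 : ZMod n) = ((1 : ℕ) : ZMod n) by push_cast; rfl, ZMod.val_natCast]
      refine MC.ext ?_ ?_
      · show (1 : ZMod m) + u ^ (0 : ZMod n).val * ((s * (1 / n) : ℕ) : ZMod m)
          + ((s * (((0 : ZMod n).val + (1 : ZMod n).val) / n) : ℕ) : ZMod m)
          = ((s * (1 / n) : ℕ) : ZMod m) + u ^ (1 : ZMod n).val * ((t : ℤ) : ZMod m)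
          + ((s * (((1 : ZMod n).val + (0 : ZMod n).val) / n) : ℕ) : ZMod m)
        rw [ZMod.val_zero, h1v, pow_zero, one_mul]
        rw [show (1 % n + 0) / n = 0 from Nat.div_eq_of_lt (by have := Nat.mod_lt 1 hn; omega)]
        rw [show (0 + 1 % n) / n = 0 from Nat.div_eq_of_lt (by have := Nat.mod_lt 1 hn; omega)]
        rw [MC.upow_mod hu, pow_one]
        have : u * ((t : ℤ) : ZMod m) = 1 := by rw [mul_comm]; exact_mod_cast htu
        rw [this]
        push_cast
        ring
      · show (0 : ZMod n) + 1 = 1 + 0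
        ring
    calc b⁻¹ * a * b = b⁻¹ * (a * b) := by group
      _ = b⁻¹ * (b * a ^ t) := by rw [key]
      _ = a ^ t := by group
  -- order of a
  have horda : orderOf a = m := by
    refine Nat.dvd_antisymm (orderOf_dvd_of_pow_eq_one ham) ?_
    have h := pow_orderOf_eq_one a
    rw [apow] at h
    have : ((orderOf a : ℕ) : ZMod m) = 0 := congrArg MC.i h
    exact (ZMod.natCast_eq_zero_iff _ _).mp this
  -- order of b
  have hKn : m * n / s = n * (m / s) := by
    rw [mul_comm m n, Nat.mul_div_assoc n hs]
  have hordb : orderOf b = m * n / s := by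
    rw [hKn]
    have hbK : b ^ (n * (m / s)) = 1 := by
      rw [bpow]
      refine MC.ext ?_ ?_
      · show ((s * (n * (m / s) / n) : ℕ) : ZMod m) = 0
        rw [Nat.mul_div_cancel_left _ hn, Nat.mul_div_cancel' hs]
        exact ZMod.natCast_self m
      · show ((n * (m / s) : ℕ) : ZMod n) = 0
        push_cast
        simp [ZMod.natCast_self]
    refine Nat.dvd_antisymm (orderOf_dvd_of_pow_eq_one hbK) ?_
    have h := pow_orderOf_eq_one b
    set L := orderOf b with hL
    rw [bpow] at h
    have hc1 : ((s * (L / n) : ℕ) : ZMod m) = 0 := congrArg MC.i h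
    have hc2 : ((L : ℕ) : ZMod n) = 0 := congrArg MC.j h
    have hnL : n ∣ L := (ZMod.natCast_eq_zero_iff _ _).mp hc2
    have hmL : m ∣ s * (L / n) := (ZMod.natCast_eq_zero_iff _ _).mp hc1
    have hms : s * (m / s) = m := Nat.mul_div_cancel' hs
    rw [← hms] at hmL
    have hdvd : m / s ∣ L / n := by
      rcases hmL with ⟨c, hc⟩
      exact ⟨c, by
        have := hc
        rw [mul_assoc] at this
        exact Nat.eq_of_mul_eq_mul_left spos this⟩
    calc n * (m / s) ∣ n * (L / n) := Nat.mul_dvd_mul_left n hdvd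
      _ = L := Nat.mul_div_cancel' hnL
  -- injectivity
  have hinj : Function.Injective (fun p : ZMod m × ZMod n => a ^ (p.1.val) * b ^ (p.2.val)) := by
    intro p q hpq
    simp only [hpair] at hpq
    have h1 : p.1 = q.1 := congrArg MC.i hpq
    have h2 : p.2 = q.2 := congrArg MC.j hpq
    exact Prod.ext h1 h2
  exact ⟨horda, hordb, ham, hbn, hconj, hinj⟩


/-- Relations for the metacyclic presentation `⟨a, b ∣ a^m = 1, b^n = a^s, b⁻¹ a b = a^t⟩`,
where `a` is indexed by `true` and `b` by `false`. -/
def metacyclicRels (m n s : ℕ) (t : ℤ) : Set (FreeGroup Bool) :=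
  {FreeGroup.of true ^ m,
   FreeGroup.of false ^ n * (FreeGroup.of true ^ s)⁻¹,
   (FreeGroup.of false)⁻¹ * FreeGroup.of true * FreeGroup.of false *
     (FreeGroup.of true ^ t)⁻¹}

theorem stmt12 (m n s : ℕ) (t : ℤ) (hm : 0 < m) (hn : 0 < n) (hs : s ∣ m)
    (hco : Int.gcd t m = 1) (h1 : (m : ℤ) ∣ s * (t - 1)) (h2 : (m : ℤ) ∣ t ^ n - 1) :
    Nat.card (PresentedGroup (metacyclicRels m n s t)) = m * n ∧
    orderOf (PresentedGroup.of (rels := metacyclicRels m n s t) true) = m ∧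
    orderOf (PresentedGroup.of (rels := metacyclicRels m n s t) false) = m * n / s := by
  have hnm : NeZero m := ⟨hm.ne'⟩
  have hnn : NeZero n := ⟨hn.ne'⟩
  have spos : 0 < s := Nat.pos_of_dvd_of_pos hs hm
  obtain ⟨G, _, a₀, b₀, horda, hordb, ham, hbn, hconj, hinj⟩ :=
    mc_package m n s t hm hn hs hco h1 h2
  set rels := metacyclicRels m n s t with hrelsdef
  set a : PresentedGroup rels := PresentedGroup.of true with hadef
  set b : PresentedGroup rels := PresentedGroup.of false with hbdef
  -- relations hold in the presented group
  have hone : ∀ r ∈ rels, (PresentedGroup.mk rels) r = 1 := fun r hr =>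
    (QuotientGroup.eq_one_iff r).mpr (Subgroup.subset_normalClosure hr)
  have hmem1 : (FreeGroup.of true ^ m) ∈ rels := Or.inl rfl
  have hmem2 : (FreeGroup.of false ^ n * (FreeGroup.of true ^ s)⁻¹) ∈ rels :=
    Or.inr (Or.inl rfl)
  have hmem3 : ((FreeGroup.of false)⁻¹ * FreeGroup.of true * FreeGroup.of false *
      (FreeGroup.of true ^ t)⁻¹) ∈ rels := Or.inr (Or.inr rfl)
  have rel1 : a ^ m = 1 := by
    have := hone _ hmem1
    rwa [map_pow] at this
  have rel2 : b ^ n = a ^ s := by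
    have := hone _ hmem2
    rw [map_mul, map_inv, map_pow, map_pow] at this
    exact eq_of_div_eq_one this
  have rel3 : b⁻¹ * a * b = a ^ t := by
    have := hone _ hmem3
    rw [map_mul, map_inv, map_mul, map_mul, map_inv, map_zpow] at this
    exact eq_of_div_eq_one this
  -- homomorphism to the concrete group
  have hrels : ∀ r ∈ rels, (FreeGroup.lift (fun x => if x then a₀ else b₀)) r = 1 := by
    intro r hr
    rcases hr with rfl | rfl | rfl
    · rw [map_pow, FreeGroup.lift_apply_of, if_pos rfl, ham]
    · rw [map_mul, map_inv, map_pow, map_pow, FreeGroup.lift_apply_of, FreeGroup.lift_apply_of,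
        if_pos rfl, if_neg (by simp), hbn, mul_inv_cancel]
    · rw [map_mul, map_inv, map_mul, map_mul, map_inv, map_zpow, FreeGroup.lift_apply_of,
        FreeGroup.lift_apply_of, if_pos rfl, if_neg (by simp), hconj, mul_inv_cancel]
  set π : PresentedGroup rels →* G := PresentedGroup.toGroup hrels with hπdef
  have hπa : π a = a₀ := by rw [hadef, hπdef, PresentedGroup.toGroup.of]; simp
  have hπb : π b = b₀ := by rw [hbdef, hπdef, PresentedGroup.toGroup.of]; simp
  -- exponent arithmetic in the presented group
  have amod : ∀ x : ℕ, a ^ (x % m) = a ^ x := fun x => (pow_eq_pow_mod x rel1).symm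
  have azpow : ∀ k : ℤ, a ^ k = a ^ ((k : ZMod m)).val := by
    intro k
    have hm1 : a ^ (m : ℤ) = 1 := by rw [zpow_natCast, rel1]
    have hval : (((k : ZMod m)).val : ℤ) = k % m := ZMod.val_intCast k
    calc a ^ k = a ^ ((m : ℤ) * (k / m) + k % m) := by rw [Int.mul_ediv_add_emod k (m : ℤ)]
      _ = (a ^ (m : ℤ)) ^ (k / m) * a ^ (k % m) := by rw [zpow_add, zpow_mul]
      _ = a ^ (k % m) := by rw [hm1, one_zpow, one_mul]
      _ = a ^ ((((k : ZMod m)).val : ℤ)) := by rw [hval]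
      _ = a ^ ((k : ZMod m)).val := by rw [zpow_natCast]
  -- the inverse exponent σ
  have htunit : IsUnit ((t : ℤ) : ZMod m) := by
    have htu' : IsCoprime (t : ℤ) (m : ℤ) := Int.isCoprime_iff_gcd_eq_one.mpr hco
    have := IsCoprime.map htu' (Int.castRingHom (ZMod m))
    rw [eq_intCast, eq_intCast] at this
    rw [show (((m : ℤ)) : ZMod m) = 0 from by push_cast; exact ZMod.natCast_self m] at this
    exact (isCoprime_zero_right).mp this
  set u : ZMod m := ((htunit.unit⁻¹ : (ZMod m)ˣ) : ZMod m) with hudef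
  have htu : ((t : ZMod m)) * u = 1 := by
    have h' : (htunit.unit : ZMod m) * ((htunit.unit⁻¹ : (ZMod m)ˣ) : ZMod m) = 1 := by
      exact_mod_cast htunit.unit.mul_inv
    rwa [htunit.unit_spec] at h'
  set τ : ℕ := ((t : ZMod m)).val with hτdef
  set σ : ℕ := u.val with hσdef
  have hτσ : (τ * σ) % m = 1 % m := by
    have h1' : ((t : ZMod m) * u).val = (τ * σ) % m := ZMod.val_mul _ _
    have h2' : ((1 : ZMod m)).val = 1 % m := by
      rw [show (1 : ZMod m) = ((1 : ℕ) : ZMod m) by push_cast; rfl, ZMod.val_natCast]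
    rw [htu, h2'] at h1'
    exact h1'.symm
  have conjτ : b⁻¹ * a * b = a ^ τ := by rw [rel3, azpow t]
  have conjσ : b⁻¹ * a ^ σ * b = a := by
    calc b⁻¹ * a ^ σ * b = b⁻¹ * a ^ σ * b⁻¹⁻¹ := by rw [inv_inv]
      _ = (b⁻¹ * a * b⁻¹⁻¹) ^ σ := (conj_pow).symm
      _ = (b⁻¹ * a * b) ^ σ := by rw [inv_inv]
      _ = (a ^ τ) ^ σ := by rw [conjτ]
      _ = a ^ (τ * σ) := by rw [← pow_mul]
      _ = a ^ ((τ * σ) % m) := (amod _).symm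
      _ = a ^ (1 % m) := by rw [hτσ]
      _ = a ^ 1 := amod 1
      _ = a := pow_one a
  have conj3 : b * a = a ^ σ * b := by
    calc b * a = b * (b⁻¹ * a ^ σ * b) := by rw [conjσ]
      _ = a ^ σ * b := by group
  have conjy : ∀ y : ℕ, b * a ^ y = a ^ (σ * y) * b := by
    intro y
    induction y with
    | zero => simp
    | succ y ih =>
      calc b * a ^ (y + 1) = (b * a ^ y) * a := by rw [pow_succ]; group
        _ = a ^ (σ * y) * (b * a) := by rw [ih]; group
        _ = a ^ (σ * y) * (a ^ σ * b) := by rw [conj3]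
        _ = a ^ (σ * y + σ) * b := by rw [pow_add]; group
        _ = a ^ (σ * (y + 1)) * b := by rw [show σ * y + σ = σ * (y + 1) from by ring]
  have conjxy : ∀ x y : ℕ, b ^ x * a ^ y = a ^ (σ ^ x * y) * b ^ x := by
    intro x
    induction x with
    | zero => intro y; simp
    | succ x ih =>
      intro y
      calc b ^ (x + 1) * a ^ y = b ^ x * (b * a ^ y) := by rw [pow_succ]; group
        _ = b ^ x * (a ^ (σ * y) * b) := by rw [conjy]
        _ = (b ^ x * a ^ (σ * y)) * b := by group
        _ = (a ^ (σ ^ x * (σ * y)) * b ^ x) * b := by rw [ih]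
        _ = a ^ (σ ^ (x + 1) * y) * b ^ (x + 1) := by
            rw [show σ ^ x * (σ * y) = σ ^ (x + 1) * y from by ring, pow_succ b]
            group
  have hKpos : 0 < n * (m / s) := Nat.mul_pos hn (Nat.div_pos (Nat.le_of_dvd hm hs) spos)
  have bK : b ^ (n * (m / s)) = 1 := by
    rw [pow_mul, rel2, ← pow_mul, Nat.mul_div_cancel' hs, rel1]
  -- every element is a^i * b^j
  have exp_lemma : ∀ (g : PresentedGroup rels) (x : ℕ), 0 < x → g ^ x = 1 →
      ∀ i : ℕ, g ^ i * g ^ (i * (x - 1)) = 1 := by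
    intro g x hx hgx i
    have hexp : i + i * (x - 1) = i * x := by
      cases x with
      | zero => exact absurd hx (lt_irrefl 0)
      | succ x' =>
        simp only [Nat.add_sub_cancel]
        have : i * (x' + 1) = i * x' + i := Nat.mul_succ i x'
        omega
    rw [← pow_add, hexp, mul_comm i x, pow_mul, hgx, one_pow]
  set S : Subgroup (PresentedGroup rels) :=
    { carrier := {g | ∃ i j : ℕ, g = a ^ i * b ^ j}
      one_mem' := ⟨0, 0, by simp⟩
      mul_mem' := by
        rintro x y ⟨i, j, rfl⟩ ⟨i', j', rfl⟩
        refine ⟨i + σ ^ j * i', j + j', ?_⟩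
        calc a ^ i * b ^ j * (a ^ i' * b ^ j') = a ^ i * (b ^ j * a ^ i') * b ^ j' := by group
          _ = a ^ i * (a ^ (σ ^ j * i') * b ^ j) * b ^ j' := by rw [conjxy]
          _ = a ^ (i + σ ^ j * i') * b ^ (j + j') := by rw [pow_add, pow_add]; group
      inv_mem' := by
        rintro x ⟨i, j, rfl⟩
        have hmulone : (a ^ i * b ^ j) *
            (b ^ (j * (n * (m / s) - 1)) * a ^ (i * (m - 1))) = 1 := by
          have e1 := exp_lemma b (n * (m / s)) hKpos bK j
          have e2 := exp_lemma a m hm rel1 i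
          calc (a ^ i * b ^ j) * (b ^ (j * (n * (m / s) - 1)) * a ^ (i * (m - 1)))
              = a ^ i * (b ^ j * b ^ (j * (n * (m / s) - 1))) * a ^ (i * (m - 1)) := by group
            _ = a ^ i * 1 * a ^ (i * (m - 1)) := by rw [e1]
            _ = a ^ i * a ^ (i * (m - 1)) := by rw [mul_one]
            _ = 1 := e2
        have hinv : (a ^ i * b ^ j)⁻¹ = b ^ (j * (n * (m / s) - 1)) * a ^ (i * (m - 1)) :=
          inv_eq_of_mul_eq_one_right hmulone
        refine ⟨σ ^ (j * (n * (m / s) - 1)) * (i * (m - 1)), j * (n * (m / s) - 1), ?_⟩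
        rw [hinv, conjxy] } with hSdef
  have hS_all : ∀ g : PresentedGroup rels, g ∈ S := by
    intro g
    refine PresentedGroup.generated_by rels S ?_ g
    intro x
    cases x
    · exact ⟨0, 1, by simp; rfl⟩
    · exact ⟨1, 0, by simp; rfl⟩
  set f : ZMod m × ZMod n → PresentedGroup rels :=
    fun p => a ^ (p.1.val) * b ^ (p.2.val) with hfdef
  have fsurj : Function.Surjective f := by
    intro g
    obtain ⟨i, j, rfl⟩ := hS_all g
    refine ⟨(((i + s * (j / n) : ℕ) : ZMod m), ((j : ℕ) : ZMod n)), ?_⟩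
    show a ^ (((i + s * (j / n) : ℕ) : ZMod m)).val * b ^ (((j : ℕ) : ZMod n)).val
      = a ^ i * b ^ j
    rw [ZMod.val_natCast, ZMod.val_natCast, amod]
    calc a ^ (i + s * (j / n)) * b ^ (j % n)
        = a ^ i * ((a ^ s) ^ (j / n) * b ^ (j % n)) := by rw [pow_add, pow_mul]; group
      _ = a ^ i * ((b ^ n) ^ (j / n) * b ^ (j % n)) := by rw [rel2]
      _ = a ^ i * b ^ (n * (j / n) + j % n) := by rw [← pow_mul, ← pow_add]
      _ = a ^ i * b ^ j := by rw [Nat.div_add_mod]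
  have finj : Function.Injective f := by
    intro p q h
    apply hinj
    have hπeq := congrArg π h
    simp only [hfdef, map_mul, map_pow, hπa, hπb] at hπeq
    exact hπeq
  have hcard : Nat.card (PresentedGroup rels) = m * n := by
    calc Nat.card (PresentedGroup rels) = Nat.card (ZMod m × ZMod n) :=
          (Nat.card_eq_of_bijective f ⟨finj, fsurj⟩).symm
      _ = m * n := by rw [Nat.card_prod, Nat.card_zmod, Nat.card_zmod]
  have horda' : orderOf a = m := by
    refine Nat.dvd_antisymm (orderOf_dvd_of_pow_eq_one rel1) ?_
    rw [← horda, ← hπa]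
    exact orderOf_map_dvd π a
  have hordb' : orderOf b = m * n / s := by
    have hKn : m * n / s = n * (m / s) := by
      rw [mul_comm m n, Nat.mul_div_assoc n hs]
    refine Nat.dvd_antisymm (orderOf_dvd_of_pow_eq_one (by rw [hKn]; exact bK)) ?_
    rw [← hordb, ← hπb]
    exact orderOf_map_dvd π b
  exact ⟨hcard, horda', hordb'⟩
end

section
/- Let m be a power of 2 with m ≥ 4 and let r be a divisor of m with 4 | r. Then the multiplicative order of -1 + r modulo m equals 2 if r = m, and equals m/r otherwise. -/
lemma aux_key15 (j : ℕ) (hj : 2 ≤ j) :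
    ∀ t : ℕ, 1 ≤ t → ∃ c : ℤ, Odd c ∧ ((2:ℤ)^j - 1)^(2^t) = 1 + 2^(j+t) * c := by
  intro t ht
  induction t with
  | zero => omega
  | succ t ih =>
    rcases Nat.lt_or_ge t 1 with h1 | h1
    · -- t = 0
      have ht0 : t = 0 := by omega
      subst ht0
      obtain ⟨j', rfl⟩ : ∃ j', j = j' + 2 := ⟨j - 2, by omega⟩
      refine ⟨2^(j'+1) - 1, ?_, ?_⟩
      · have he : Even ((2:ℤ)^(j'+1)) := ⟨2^j', by rw [pow_succ]; ring⟩
        exact he.sub_odd odd_one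
      · simp only [pow_succ, pow_zero]
        ring
    · obtain ⟨c, hc, heq⟩ := ih h1
      obtain ⟨s, hs⟩ : ∃ s, j + t = s + 1 := ⟨j + t - 1, by omega⟩
      refine ⟨c * (1 + 2^(j+t-1) * c), ?_, ?_⟩
      · have he : Even ((2:ℤ)^(j+t-1) * c) := by
          have : j + t - 1 = (j + t - 2) + 1 := by omega
          rw [this]
          have he2 : Even ((2:ℤ)^(j+t-2+1)) := ⟨2^(j+t-2), by rw [pow_succ]; ring⟩
          exact he2.mul_right c
        exact hc.mul (by rw [add_comm]; exact he.add_one)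
      · have h1' : j + t - 1 = s := by omega
        rw [pow_succ 2 t, pow_mul, heq, h1', hs, show j+(t+1) = s+1+1 by omega]
        simp only [pow_succ]
        ring

theorem stmt15 (m r : ℕ) (hm : ∃ k : ℕ, 2 ≤ k ∧ m = 2 ^ k) (hr : r ∣ m) (h4 : 4 ∣ r) :
    orderOf ((r : ZMod m) - 1) = if r = m then 2 else m / r := by
  obtain ⟨k, hk2, rfl⟩ := hm
  obtain ⟨j, hjk, rfl⟩ := (Nat.dvd_prime_pow Nat.prime_two).mp hr
  have hj2 : 2 ≤ j := by
    by_contra h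
    interval_cases j <;> norm_num at h4
  haveI : NeZero ((2:ℕ)^k) := ⟨by positivity⟩
  have hinj : ((2:ℕ)^j = 2^k) ↔ j = k :=
    ⟨fun h => Nat.pow_right_injective (le_refl 2) h, fun h => by rw [h]⟩
  have hucast : ((((2:ℕ)^j : ℕ) : ZMod (2^k)) - 1) = (((2:ℤ)^j - 1 : ℤ) : ZMod (2^k)) := by
    push_cast; ring
  rcases eq_or_lt_of_le hjk with hjeq | hjlt
  · subst hjeq
    rw [if_pos rfl]
    have : (((2:ℕ)^j : ℕ) : ZMod (2^j)) = 0 := ZMod.natCast_self _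
    rw [this, zero_sub]
    haveI : Fact (1 < 2^j) := ⟨by have := Nat.pow_le_pow_right (show 1 ≤ 2 by norm_num) hj2; omega⟩
    rw [orderOf_neg_one]
    have : ringChar (ZMod (2^j)) = 2^j := ZMod.ringChar_zmod_n _
    rw [this]
    have : (2:ℕ)^j ≠ 2 := by
      intro h
      have : (2:ℕ)^j ≥ 2^2 := Nat.pow_le_pow_right (by norm_num) hj2
      omega
    simp [this]
  · rw [if_neg (fun h => absurd (hinj.mp h) (by omega))]
    rw [Nat.pow_div hjk (by norm_num)]
    haveI : Fact (Nat.Prime 2) := ⟨Nat.prime_two⟩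
    set n := k - j - 1 with hn
    have hkj : k - j = n + 1 := by omega
    rw [hkj]
    apply orderOf_eq_prime_pow (p := 2) (n := n)
    · -- not (u ^ 2^n = 1)
      rcases Nat.lt_or_ge n 1 with hn0 | hn1
      · have hn0' : n = 0 := by omega
        rw [hn0', pow_zero, pow_one, hucast]
        intro h
        have h2 : (((2:ℤ)^j - 2 : ℤ) : ZMod (2^k)) = 0 := by
          push_cast at h ⊢
          linear_combination h
        rw [ZMod.intCast_zmod_eq_zero_iff_dvd] at h2
        have hb1 : (0:ℤ) < 2^j - 2 := by
          have : (2:ℤ)^2 ≤ 2^j := pow_le_pow_right₀ (by norm_num) hj2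
          norm_num at this ⊢; omega
        have hb2 : (2:ℤ)^j - 2 < 2^k := by
          have : (2:ℤ)^j < 2^k := pow_lt_pow_right₀ (by norm_num) hjlt
          omega
        have := Int.le_of_dvd hb1 h2
        push_cast at this
        omega
      · obtain ⟨c, hc, heq⟩ := aux_key15 j hj2 n hn1
        have hjn : j + n = k - 1 := by omega
        rw [hucast, ← Int.cast_pow, heq, hjn]
        intro h
        have h2 : (((2:ℤ)^(k-1) * c : ℤ) : ZMod (2^k)) = 0 := by
          push_cast at h ⊢
          linear_combination h
        rw [ZMod.intCast_zmod_eq_zero_iff_dvd] at h2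
        have hk1 : (2:ℕ)^k = 2^(k-1) * 2 := by
          rw [← pow_succ]
          congr 1
          omega
        rw [hk1] at h2
        push_cast at h2
        have h3 : (2:ℤ) ∣ c := by
          have hne' : ((2:ℤ)^(k-1)) ≠ 0 := by positivity
          exact (mul_dvd_mul_iff_left hne').mp h2
        have : Even c := by
          obtain ⟨d, hd⟩ := h3; exact ⟨d, by omega⟩
        exact (Int.not_even_iff_odd.mpr hc) this
    · -- u ^ 2^(n+1) = 1
      obtain ⟨c, hc, heq⟩ := aux_key15 j hj2 (n+1) (by omega)
      have hjn : j + (n + 1) = k := by omega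
      rw [hucast, ← Int.cast_pow, heq, hjn]
      have h2 : (((2:ℤ)^k * c : ℤ) : ZMod (2^k)) = 0 := by
        rw [ZMod.intCast_zmod_eq_zero_iff_dvd]
        exact ⟨c, by push_cast; ring⟩
      push_cast at h2 ⊢
      rw [h2]
      ring
end

section
/- Let G be a finite metacyclic group with a metacyclic factorization G = A·B, where A is a normal cyclic subgroup, B cyclic, and let p be a prime such that G has a normal Hall p'-subgroup. Then [B_{p'}, A_p] = 1, i.e. the p'-part of B centralizes the p-part of A. -/
theorem stmt18 {G : Type*} [Group G] [Finite G] (A B : Subgroup G) (hA : A.Normal)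
    (hcA : IsCyclic A) (hcB : IsCyclic B)
    (hfac : ∀ g : G, ∃ a ∈ A, ∃ b ∈ B, g = a * b)
    (p : ℕ) (hp : p.Prime)
    (hN : ∃ N : Subgroup G, N.Normal ∧ IsHallSubgroup {q : ℕ | q.Prime ∧ q ≠ p} N) :
    ∀ b ∈ B, ¬ p ∣ orderOf b → ∀ a ∈ A, (∃ k : ℕ, orderOf a = p ^ k) →
      b * a = a * b := by
  obtain ⟨N, hNnorm, hHall⟩ := hN
  intro b hb hpb a ha ⟨k, hk⟩
  -- Step 1: b ∈ N
  have hbN : b ∈ N := by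
    have h1 : orderOf ((QuotientGroup.mk' N) b) ∣ orderOf b := orderOf_map_dvd _ b
    have h2 : orderOf ((QuotientGroup.mk' N) b) ∣ N.index := by
      have := orderOf_dvd_natCard ((QuotientGroup.mk' N) b)
      simpa [Subgroup.index] using this
    have hone : orderOf ((QuotientGroup.mk' N) b) = 1 := by
      by_contra hne
      set q := (orderOf ((QuotientGroup.mk' N) b)).minFac with hq
      have hqp : q.Prime := Nat.minFac_prime hne
      have hqd : q ∣ orderOf ((QuotientGroup.mk' N) b) := Nat.minFac_dvd _
      have hqi : q ∣ N.index := hqd.trans h2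
      have : q ∉ {q : ℕ | q.Prime ∧ q ≠ p} := hHall.2 q hqp hqi
      have hqp' : q = p := by
        by_contra h
        exact this ⟨hqp, h⟩
      exact hpb (hqp' ▸ hqd.trans h1)
    have : (QuotientGroup.mk' N) b = 1 := orderOf_eq_one_iff.mp hone
    rwa [← QuotientGroup.eq_one_iff b]
  -- Step 2: the commutator c
  set c := b * a * b⁻¹ * a⁻¹ with hc
  have hconjA : b * a * b⁻¹ ∈ A := hA.conj_mem a ha b
  have hcN : c ∈ N := by
    have h1 : a * b⁻¹ * a⁻¹ ∈ N := hNnorm.conj_mem b⁻¹ (N.inv_mem hbN) a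
    have : b * (a * b⁻¹ * a⁻¹) ∈ N := N.mul_mem hbN h1
    simpa [hc, mul_assoc] using this
  -- order of c divides p ^ k
  have hordconj : orderOf (b * a * b⁻¹) = orderOf a :=
    orderOf_injective (MulAut.conj b).toMonoidHom (MulEquiv.injective _) a
  have hcomm : Commute (b * a * b⁻¹) a⁻¹ := by
    have := hcA
    letI : CommGroup A := hcA.commGroup
    have h := mul_comm (⟨b * a * b⁻¹, hconjA⟩ : A) ⟨a⁻¹, A.inv_mem ha⟩
    exact congrArg Subtype.val h
  have hdvd : orderOf c ∣ p ^ k := by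
    have := hcomm.orderOf_mul_dvd_lcm
    rw [hordconj, orderOf_inv, hk] at this
    simpa [Nat.lcm_self] using this
  -- order of c is a p'-number
  have hdvdN : orderOf c ∣ Nat.card N := by
    have := orderOf_dvd_natCard (⟨c, hcN⟩ : N)
    rwa [Subgroup.orderOf_mk] at this
  have hcone : orderOf c = 1 := by
    by_contra hne
    set q := (orderOf c).minFac with hq
    have hqp : q.Prime := Nat.minFac_prime hne
    have hqd : q ∣ orderOf c := Nat.minFac_dvd _
    have hqP : q = p := by
      have : q ∣ p ^ k := hqd.trans hdvd
      exact (Nat.prime_dvd_prime_iff_eq hqp hp).mp (hqp.dvd_of_dvd_pow this)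
    have : q ∈ {q : ℕ | q.Prime ∧ q ≠ p} := hHall.1 q hqp (hqd.trans hdvdN)
    exact this.2 hqP
  have : c = 1 := orderOf_eq_one_iff.mp hcone
  have : b * a * b⁻¹ * a⁻¹ = 1 := this
  calc b * a = (b * a * b⁻¹ * a⁻¹) * (a * b) := by group
    _ = a * b := by rw [this]; group
end

section
/- Let p be a prime dividing m, let A be a normal cyclic subgroup of a finite group G with |A| = m, let C be the unique subgroup of A of order p, and suppose C is central in G. Then the subgroup A_{p'}·B_{p'} is a normal Hall p'-subgroup of G for any cyclic subgroup B with G = A·B; in particular G splits as a semidirect product of its Hall p'-subgroup with a Sylow p-subgroup. -/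
open Subgroup
open scoped Pointwise

private lemma binom19 (x : ℤ) : ∀ r : ℕ, ∃ s : ℤ, (1 + x) ^ r = 1 + r * x + x ^ 2 * s := by
  intro r
  induction r with
  | zero => exact ⟨0, by push_cast; ring⟩
  | succ r ih =>
    obtain ⟨s, hs⟩ := ih
    exact ⟨s + r + x * s, by rw [pow_succ, hs]; push_cast; ring⟩

private lemma nt19 (p : ℕ) (hp : p.Prime) (r : ℕ) (hr : ¬ p ∣ r) (u : ℤ)
    (h1 : (p : ℤ) ∣ u - 1) :
    ∀ k : ℕ, ((p : ℤ) ^ k ∣ u ^ r - 1) → (p : ℤ) ^ k ∣ u - 1 := by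
  intro k
  induction k with
  | zero => intro _; simp
  | succ k ih =>
    intro hk1
    rcases Nat.eq_zero_or_pos k with rfl | hk
    · simpa using h1
    · have hk' : (p : ℤ) ^ k ∣ u - 1 :=
        ih ((pow_dvd_pow _ (Nat.le_succ k)).trans hk1)
      obtain ⟨t, ht⟩ := hk'
      obtain ⟨s, hs⟩ := binom19 ((p : ℤ) ^ k * t) r
      have hu : u = 1 + (p : ℤ) ^ k * t := by linarith
      have hexp : u ^ r - 1 = r * ((p:ℤ)^k * t) + ((p:ℤ)^k * t) ^ 2 * s := by
        rw [hu, hs]; ring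
      have h2k : (p : ℤ) ^ (k + 1) ∣ ((p:ℤ)^k * t) ^ 2 * s := by
        have h0 : (p : ℤ) ^ (k + 1) ∣ ((p:ℤ)^k) ^ 2 := by
          rw [← pow_mul]
          exact pow_dvd_pow _ (by omega)
        have h1' : (p : ℤ) ^ (k + 1) ∣ ((p:ℤ)^k * t) ^ 2 := by
          rw [mul_pow]
          exact h0.mul_right _
        exact h1'.mul_right s
      have h3 : (p : ℤ) ^ (k + 1) ∣ (r : ℤ) * ((p:ℤ)^k * t) := by
        have := dvd_sub hk1 h2k
        rw [hexp] at this
        simpa using this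
      have h4 : (p : ℤ) ∣ (r : ℤ) * t := by
        have hcan : (p : ℤ) ^ (k+1) = (p:ℤ)^k * p := by ring
        have h5 : (p:ℤ)^k * ((p:ℤ) * 1) ∣ (p:ℤ)^k * ((r:ℤ) * t) := by
          rw [mul_one, ← hcan]
          convert h3 using 1; ring
        have hpk : ((p:ℤ)^k) ≠ 0 := pow_ne_zero _ (by exact_mod_cast hp.ne_zero)
        have := (mul_dvd_mul_iff_left hpk).mp h5
        simpa using this
      have hpt : (p : ℤ) ∣ t := by
        rcases (Int.Prime.dvd_mul' (hp) h4) with h | h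
        · exact absurd (Int.ofNat_dvd.mp (by exact_mod_cast h)) hr
        · exact h
      obtain ⟨w, hw⟩ := hpt
      exact ⟨w, by rw [ht, hw]; ring⟩

private lemma pDecomp19 {G : Type*} [Group G] [Finite G] (p : ℕ) (hp : p.Prime) (a : G) :
    ∃ x ∈ Subgroup.zpowers a, ∃ y ∈ Subgroup.zpowers a,
      a = x * y ∧ (∃ k : ℕ, orderOf x = p ^ k) ∧ ¬ p ∣ orderOf y := by
  set n := orderOf a with hn
  have hn0 : n ≠ 0 := (orderOf_pos a).ne'
  set k := n.factorization p with hk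
  set m := ordCompl[p] n with hm
  have hnm : p ^ k * m = n := Nat.ordProj_mul_ordCompl_eq_self n p
  have hbez : (1 : ℤ) = (p ^ k : ℕ) * Nat.gcdA (p ^ k) m + (m : ℕ) * Nat.gcdB (p ^ k) m := by
    have cop : Nat.Coprime (p ^ k) m := (Nat.coprime_ordCompl hp hn0).pow_left _
    have := Nat.gcd_eq_gcd_ab (p ^ k) m
    rw [cop] at this
    exact_mod_cast this
  refine ⟨a ^ ((m : ℤ) * Nat.gcdB (p ^ k) m), ⟨_, rfl⟩,
    a ^ ((p ^ k : ℤ) * Nat.gcdA (p ^ k) m), ⟨_, rfl⟩, ?_, ?_, ?_⟩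
  · rw [← zpow_add]
    have h1 : (m : ℤ) * Nat.gcdB (p ^ k) m + (p ^ k : ℤ) * Nat.gcdA (p ^ k) m = 1 := by
      push_cast at hbez ⊢
      linarith
    rw [h1, zpow_one]
  · have hx : (a ^ ((m : ℤ) * Nat.gcdB (p ^ k) m)) ^ (p ^ k : ℕ) = 1 := by
      rw [← zpow_natCast, ← zpow_mul]
      have : (m : ℤ) * Nat.gcdB (p ^ k) m * (p ^ k : ℕ) = (n : ℤ) * Nat.gcdB (p ^ k) m := by
        push_cast [← hnm]; ring
      rw [this, zpow_mul, zpow_natCast, pow_orderOf_eq_one, one_zpow]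
    have := orderOf_dvd_of_pow_eq_one hx
    obtain ⟨j, _, hj⟩ := (Nat.dvd_prime_pow hp).mp this
    exact ⟨j, hj⟩
  · have hy : (a ^ ((p ^ k : ℤ) * Nat.gcdA (p ^ k) m)) ^ (m : ℕ) = 1 := by
      rw [← zpow_natCast, ← zpow_mul]
      have : (p ^ k : ℤ) * Nat.gcdA (p ^ k) m * (m : ℕ) = (n : ℤ) * Nat.gcdA (p ^ k) m := by
        push_cast [← hnm]; ring
      rw [this, zpow_mul, zpow_natCast, pow_orderOf_eq_one, one_zpow]
    intro hpd
    exact (Nat.not_dvd_ordCompl hp hn0) (hpd.trans (orderOf_dvd_of_pow_eq_one hy))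

private lemma mem_of_pow_card19 {H : Type*} [Group H] [Finite H] [IsCyclic H]
    (K : Subgroup H) (d : ℕ) (hd : Nat.card K = d) (x : H) (hx : x ^ d = 1) : x ∈ K := by
  classical
  have := Fintype.ofFinite H
  have hd0 : 0 < d := hd ▸ Nat.card_pos
  have hS := IsCyclic.card_pow_eq_one_le (α := H) hd0
  set S : Finset H := Finset.univ.filter (fun a => a ^ d = 1) with hSdef
  have hT : (K : Set H).toFinset ⊆ S := by
    intro y hy
    rw [Set.mem_toFinset] at hy
    rw [hSdef, Finset.mem_filter]
    refine ⟨Finset.mem_univ _, ?_⟩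
    have : (⟨y, hy⟩ : K) ^ d = 1 := by
      rw [← hd]
      exact pow_card_eq_one'
    have h2 := congrArg (Subtype.val) this
    simpa using h2
  have hcardT : (K : Set H).toFinset.card = d := by
    rw [Set.toFinset_card, ← Nat.card_eq_fintype_card]
    simpa using hd
  have hST : S = (K : Set H).toFinset := by
    apply (Finset.eq_of_subset_of_card_le hT ?_).symm
    rw [hcardT]
    exact hS
  have hxS : x ∈ S := by
    rw [hSdef, Finset.mem_filter]
    exact ⟨Finset.mem_univ _, hx⟩
  rw [hST, Set.mem_toFinset] at hxS
  exact hxS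

private lemma key_conj19 {G : Type*} [Group G] [Finite G] (A : Subgroup G) (hA : A.Normal)
    (hcA : IsCyclic ↥A) (p : ℕ) (hp : p.Prime)
    (C : Subgroup G) (hCA : C ≤ A) (hC : Nat.card C = p) (hcen : C ≤ Subgroup.center G)
    (b : G) (hb : ¬ p ∣ orderOf b) (a : G) (ha : a ∈ A) (k : ℕ) (hak : orderOf a = p ^ k) :
    b * a * b⁻¹ = a := by
  rcases Nat.eq_zero_or_pos k with rfl | hk
  · have : a = 1 := orderOf_eq_one_iff.mp (by simpa using hak)
    simp [this]
  haveI : IsCyclic ↥A := hcA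
  have ha' : b * a * b⁻¹ ∈ A := hA.conj_mem a ha b
  have hsc : SemiconjBy b a (b * a * b⁻¹) := by unfold SemiconjBy; group
  have horda' : orderOf (b * a * b⁻¹) = p ^ k := (hsc.orderOf_eq).symm.trans hak
  set aa : ↥A := ⟨a, ha⟩ with haa
  have hordaa : orderOf aa = p ^ k := by rw [Subgroup.orderOf_mk, hak]
  -- b * a * b⁻¹ is a power of a
  have hmem : (⟨b * a * b⁻¹, ha'⟩ : ↥A) ∈ Subgroup.zpowers aa := by
    apply mem_of_pow_card19 (Subgroup.zpowers aa) (p ^ k)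
    · rw [Nat.card_zpowers, hordaa]
    · have : (b * a * b⁻¹) ^ (p ^ k) = 1 := by
        rw [← horda']; exact pow_orderOf_eq_one _
      ext
      simpa using this
  rw [← mem_powers_iff_mem_zpowers] at hmem
  obtain ⟨u, hu⟩ := hmem
  have huG : (b * a * b⁻¹) = a ^ u := by
    have := congrArg (Subtype.val) hu
    simpa [haa] using this.symm
  -- the element a ^ (p ^ (k-1)) lies in C, hence is central
  have hcmem : a ^ (p ^ (k - 1)) ∈ C := by
    have hmem2 : (aa ^ (p ^ (k - 1))) ∈ C.subgroupOf A := by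
      apply mem_of_pow_card19 (C.subgroupOf A) p
      · rw [← hC]
        exact Nat.card_congr (Subgroup.subgroupOfEquivOfLe hCA).toEquiv
      · have hkk : k - 1 + 1 = k := by omega
        rw [← pow_mul, ← pow_succ, hkk, ← hordaa, pow_orderOf_eq_one]
    simpa [Subgroup.mem_subgroupOf] using hmem2
  have hcentral : b * (a ^ (p ^ (k - 1))) * b⁻¹ = a ^ (p ^ (k - 1)) := by
    have := (Subgroup.mem_center_iff.mp (hcen hcmem)) b
    rw [this]
    group
  -- deduce u ≡ 1 mod p
  have humod : u * p ^ (k - 1) ≡ p ^ (k - 1) [MOD p ^ k] := by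
    have h1 : (b * a * b⁻¹) ^ (p ^ (k - 1)) = a ^ (p ^ (k - 1)) := by
      rw [conj_pow]
      exact hcentral
    rw [huG, ← pow_mul] at h1
    have := (pow_eq_pow_iff_modEq (x := a)).mp h1
    rwa [hak] at this
  -- iterate conjugation: u ^ r ≡ 1 mod p ^ k where r = orderOf b
  have hiter : ∀ j : ℕ, b ^ j * a * b⁻¹ ^ j = a ^ (u ^ j) := by
    intro j
    induction j with
    | zero => simp
    | succ j ih =>
      have : b ^ (j + 1) * a * b⁻¹ ^ (j + 1) = b * (b ^ j * a * b⁻¹ ^ j) * b⁻¹ := by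
        rw [pow_succ' b, pow_succ b⁻¹]
        group
      rw [this, ih, ← conj_pow, huG, ← pow_mul, pow_succ, mul_comm (u ^ j) u]
  have hur : u ^ (orderOf b) ≡ 1 [MOD p ^ k] := by
    have h1 : a ^ (u ^ orderOf b) = a ^ 1 := by
      rw [← hiter (orderOf b), pow_orderOf_eq_one, inv_pow, pow_orderOf_eq_one]
      group
    have := (pow_eq_pow_iff_modEq (x := a)).mp h1
    rwa [hak] at this
  -- number theory
  have hfinal : u ≡ 1 [MOD p ^ k] := by
    rw [← Int.natCast_modEq_iff] at hur humod ⊢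
    have hdvd1 : (p : ℤ) ∣ (u : ℤ) - 1 := by
      have := humod.symm.dvd
      push_cast at this
      have h2 : ((p : ℤ)) ^ (k - 1) * (p : ℤ) ∣ (p : ℤ) ^ (k - 1) * (((u : ℤ) - 1)) := by
        have hk' : (p : ℤ) ^ k = (p : ℤ) ^ (k - 1) * p := by
          rw [← pow_succ]
          congr 1
          omega
        rw [← hk']
        convert this using 1
        ring
      exact (mul_dvd_mul_iff_left (pow_ne_zero (k - 1) (show (p:ℤ) ≠ 0 by exact_mod_cast hp.ne_zero))).mp h2
    have hdvd2 : ((p : ℤ)) ^ k ∣ (u : ℤ) ^ (orderOf b) - 1 := by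
      have := hur.symm.dvd
      push_cast at this
      convert this using 1
    have := nt19 p hp (orderOf b) hb (u : ℤ) hdvd1 k hdvd2
    have h3 : ((u : ℤ)) - 1 ≡ 0 [ZMOD ((p : ℤ) ^ k)] := (Int.modEq_zero_iff_dvd).mpr this
    have h4 : ((u : ℤ)) ≡ 1 [ZMOD ((p : ℤ) ^ k)] := by
      have := h3.add_right 1
      simpa using this
    exact_mod_cast h4
  rw [huG]
  rw [← pow_one a]
  rw [← pow_mul, one_mul]
  exact ((pow_eq_pow_iff_modEq (x := a)).mpr (by rw [hak]; exact hfinal.symm)).symm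

private lemma card_sup_dvd19 {G : Type*} [Group G] [Finite G] (H K : Subgroup G) [H.Normal] :
    Nat.card ↥(H ⊔ K) ∣ Nat.card H * Nat.card K := by
  have h1 : Nat.card ↥(H.subgroupOf (H ⊔ K)) * (H.subgroupOf (H ⊔ K)).index
      = Nat.card ↥(H ⊔ K) := Subgroup.card_mul_index _
  have h2 : Nat.card ↥(H.subgroupOf (H ⊔ K)) = Nat.card H :=
    Nat.card_congr (Subgroup.subgroupOfEquivOfLe le_sup_left).toEquiv
  have h3 : (H.subgroupOf (H ⊔ K)).index = (H.subgroupOf K).index :=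
    Subgroup.relIndex_sup_left K H
  have h4 : (H.subgroupOf K).index ∣ Nat.card K := Subgroup.index_dvd_card _
  rw [← h1, h2, h3]
  exact Nat.mul_dvd_mul_left _ h4

private def pPrimePart19 {G : Type*} [Group G] [Finite G] (p : ℕ) (hp : p.Prime)
    (A : Subgroup G) (hcomm : ∀ x ∈ A, ∀ y ∈ A, x * y = y * x) : Subgroup G where
  carrier := {x | x ∈ A ∧ ¬ p ∣ orderOf x}
  one_mem' := ⟨one_mem A, by simp [Nat.dvd_one, hp.ne_one]⟩
  inv_mem' := fun hx => ⟨inv_mem hx.1, by simpa [orderOf_inv] using hx.2⟩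
  mul_mem' := by
    rintro x y ⟨hxA, hxo⟩ ⟨hyA, hyo⟩
    refine ⟨mul_mem hxA hyA, fun hd => ?_⟩
    have hc : Commute x y := hcomm x hxA y hyA
    have h1 : orderOf (x * y) ∣ Nat.lcm (orderOf x) (orderOf y) := hc.orderOf_mul_dvd_lcm
    have h2 : p ∣ orderOf x * orderOf y :=
      (hd.trans h1).trans (Nat.lcm_dvd_mul _ _)
    rcases (Nat.Prime.dvd_mul hp).mp h2 with h | h
    exacts [hxo h, hyo h]

private lemma mem_pPrimePart19 {G : Type*} [Group G] [Finite G] (p : ℕ) (hp : p.Prime)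
    (A : Subgroup G) (hcomm : ∀ x ∈ A, ∀ y ∈ A, x * y = y * x) (x : G) :
    x ∈ pPrimePart19 p hp A hcomm ↔ x ∈ A ∧ ¬ p ∣ orderOf x := Iff.rfl
theorem stmt19 {G : Type*} [Group G] [Finite G] (A B : Subgroup G) (hA : A.Normal)
    (hcA : IsCyclic A) (hcB : IsCyclic B)
    (hfac : ∀ g : G, ∃ a ∈ A, ∃ b ∈ B, g = a * b)
    (p : ℕ) (hp : p.Prime) (hpm : p ∣ Nat.card A)
    (C : Subgroup G) (hCA : C ≤ A) (hC : Nat.card C = p)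
    (hcen : C ≤ Subgroup.center G) :
    ∃ N : Subgroup G,
      (N : Set G) = {x : G | ∃ a ∈ A, ∃ b ∈ B,
        ¬ p ∣ orderOf a ∧ ¬ p ∣ orderOf b ∧ x = a * b} ∧
      N.Normal ∧ IsHallSubgroup {q : ℕ | q.Prime ∧ q ≠ p} N ∧
      ∃ P : Sylow p G, N.IsComplement' (P : Subgroup G) := by
  classical
  haveI := Fact.mk hp
  -- commutativity inside A and B
  have hAcomm : ∀ x ∈ A, ∀ y ∈ A, x * y = y * x := by
    letI : CommGroup ↥A := IsCyclic.commGroup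
    intro x hx y hy
    exact congrArg Subtype.val (mul_comm (⟨x, hx⟩ : ↥A) ⟨y, hy⟩)
  have hBcomm : ∀ x ∈ B, ∀ y ∈ B, x * y = y * x := by
    letI : CommGroup ↥B := IsCyclic.commGroup
    intro x hx y hy
    exact congrArg Subtype.val (mul_comm (⟨x, hx⟩ : ↥B) ⟨y, hy⟩)
  set Ap := pPrimePart19 p hp A hAcomm with hApdef
  set Bp := pPrimePart19 p hp B hBcomm with hBpdef
  -- Ap is normal in G
  haveI hApNormal : Ap.Normal := by
    constructor
    intro n hn g
    rw [hApdef, mem_pPrimePart19] at hn ⊢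
    have hsc : SemiconjBy g n (g * n * g⁻¹) := by unfold SemiconjBy; group
    exact ⟨hA.conj_mem n hn.1 g, by rw [← hsc.orderOf_eq]; exact hn.2⟩
  set N : Subgroup G := Ap ⊔ Bp with hNdef
  have hApN : Ap ≤ N := le_sup_left
  have hBpN : Bp ≤ N := le_sup_right
  have hNset : (N : Set G) = (Ap : Set G) * (Bp : Set G) := Subgroup.normal_mul Ap Bp
  -- the carrier description
  have hset : (N : Set G) = {x : G | ∃ a ∈ A, ∃ b ∈ B,
      ¬ p ∣ orderOf a ∧ ¬ p ∣ orderOf b ∧ x = a * b} := by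
    rw [hNset]
    ext x
    constructor
    · rintro ⟨a, ha, b, hb, rfl⟩
      rw [SetLike.mem_coe, hApdef, mem_pPrimePart19] at ha
      rw [SetLike.mem_coe, hBpdef, mem_pPrimePart19] at hb
      exact ⟨a, ha.1, b, hb.1, ha.2, hb.2, rfl⟩
    · rintro ⟨a, haA, b, hbB, hao, hbo, rfl⟩
      exact ⟨a, by rw [SetLike.mem_coe, hApdef, mem_pPrimePart19]; exact ⟨haA, hao⟩,
        b, by rw [SetLike.mem_coe, hBpdef, mem_pPrimePart19]; exact ⟨hbB, hbo⟩, rfl⟩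
  -- key conjugation fact
  have hkey : ∀ b : G, ¬ p ∣ orderOf b → ∀ a ∈ A, (∃ k, orderOf a = p ^ k) →
      b * a * b⁻¹ = a := by
    rintro b hb a ha ⟨k, hk⟩
    exact key_conj19 A hA hcA p hp C hCA hC hcen b hb a ha k hk
  -- conjugates of elements of Bp stay in N
  have hBpconj : ∀ y ∈ Bp, ∀ g : G, g * y * g⁻¹ ∈ N := by
    intro y hy g
    rw [hBpdef, mem_pPrimePart19] at hy
    obtain ⟨hyB, hyo⟩ := hy
    obtain ⟨a₀, ha₀, b₀, hb₀, rfl⟩ := hfac g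
    have hb₀y : b₀ * y * b₀⁻¹ = y := by
      rw [hBcomm b₀ hb₀ y hyB]; group
    have e1 : a₀ * b₀ * y * (a₀ * b₀)⁻¹ = a₀ * y * a₀⁻¹ := by
      rw [mul_inv_rev, show a₀ * b₀ * y * (b₀⁻¹ * a₀⁻¹) = a₀ * (b₀ * y * b₀⁻¹) * a₀⁻¹ by group,
        hb₀y]
    obtain ⟨xa, hxz, ya, hyz, ha₀eq, hxk, hyao⟩ := pDecomp19 p hp a₀
    have hxaA : xa ∈ A := Subgroup.zpowers_le.mpr ha₀ hxz
    have hyaA : ya ∈ A := Subgroup.zpowers_le.mpr ha₀ hyz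
    have hxc : y * xa * y⁻¹ = xa := hkey y hyo xa hxaA hxk
    have hcmt : Commute y xa := by
      have h := hxc
      rw [mul_inv_eq_iff_eq_mul] at h
      exact h
    have hinv : xa⁻¹ * y⁻¹ = y⁻¹ * xa⁻¹ := hcmt.inv_inv.eq.symm
    have hz : y * ya⁻¹ * y⁻¹ ∈ A := hA.conj_mem ya⁻¹ (inv_mem hyaA) y
    have hzo : ¬ p ∣ orderOf (y * ya⁻¹ * y⁻¹) := by
      have hsc : SemiconjBy y ya⁻¹ (y * ya⁻¹ * y⁻¹) := by unfold SemiconjBy; group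
      rw [← hsc.orderOf_eq, orderOf_inv]
      exact hyao
    have hinner : ya * (y * ya⁻¹ * y⁻¹) ∈ Ap := by
      apply mul_mem
      · rw [hApdef, mem_pPrimePart19]; exact ⟨hyaA, hyao⟩
      · rw [hApdef, mem_pPrimePart19]; exact ⟨hz, hzo⟩
    have hcval : a₀ * y * a₀⁻¹ * y⁻¹ = xa * (ya * (y * ya⁻¹ * y⁻¹)) * xa⁻¹ := by
      calc a₀ * y * a₀⁻¹ * y⁻¹
          = xa * ya * y * ya⁻¹ * (xa⁻¹ * y⁻¹) := by rw [ha₀eq]; group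
        _ = xa * ya * y * ya⁻¹ * (y⁻¹ * xa⁻¹) := by rw [hinv]
        _ = xa * (ya * (y * ya⁻¹ * y⁻¹)) * xa⁻¹ := by group
    have hcm : a₀ * y * a₀⁻¹ * y⁻¹ ∈ Ap := by
      rw [hcval]
      exact hApNormal.conj_mem _ hinner xa
    have e2 : a₀ * y * a₀⁻¹ = (a₀ * y * a₀⁻¹ * y⁻¹) * y := by group
    rw [e1, e2]
    exact mul_mem (hApN hcm) (hBpN (by rw [hBpdef, mem_pPrimePart19]; exact ⟨hyB, hyo⟩))
  -- N is normal
  haveI hNnormal : N.Normal := by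
    constructor
    intro n hn g
    have hn' : n ∈ (N : Set G) := hn
    rw [hNset] at hn'
    obtain ⟨x, hx, y, hy, rfl⟩ := hn'
    have : g * (x * y) * g⁻¹ = (g * x * g⁻¹) * (g * y * g⁻¹) := by group
    rw [this]
    exact mul_mem (hApN (hApNormal.conj_mem x hx g)) (hBpconj y hy g)
  -- small fact: no element of a p'-order subgroup has order divisible by p
  have hpicard : ∀ (K : Subgroup G), (∀ x ∈ K, ¬ p ∣ orderOf x) →
      ∀ q : ℕ, q.Prime → q ∣ Nat.card ↥K → q ≠ p := by
    intro K hK q hq hdvd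
    haveI := Fact.mk hq
    obtain ⟨x, hx⟩ := exists_prime_orderOf_dvd_card' (G := ↥K) q hdvd
    have hxo : ¬ p ∣ orderOf (x : G) := hK _ x.2
    rw [Subgroup.orderOf_coe, hx] at hxo
    rintro rfl
    exact hxo dvd_rfl
  -- |N| is a p'-number
  have hcardN : IsPiNumber {q : ℕ | q.Prime ∧ q ≠ p} (Nat.card ↥N) := by
    intro q hq hdvd
    have h1 : q ∣ Nat.card ↥Ap * Nat.card ↥Bp := hdvd.trans (card_sup_dvd19 Ap Bp)
    have hq' : q ≠ p := by
      rcases (Nat.Prime.dvd_mul hq).mp h1 with h | h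
      · exact hpicard Ap (fun x hx => ((hApdef ▸ mem_pPrimePart19 p hp A hAcomm x).mp hx).2)
          q hq h
      · exact hpicard Bp (fun x hx => ((hBpdef ▸ mem_pPrimePart19 p hp B hBcomm x).mp hx).2)
          q hq h
    exact ⟨hq, hq'⟩
  have hNp : ¬ p ∣ Nat.card ↥N := fun h => (hcardN p hp h).2 rfl
  -- the index of N is a power of p
  set φ := QuotientGroup.mk' N with hφdef
  have hφsurj : Function.Surjective φ := QuotientGroup.mk'_surjective N
  haveI himAnormal : (A.map φ).Normal := hA.map φ hφsurj
  have hsup : A.map φ ⊔ B.map φ = ⊤ := by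
    rw [eq_top_iff]
    intro q _
    obtain ⟨g, rfl⟩ := hφsurj q
    obtain ⟨a, haA, b, hbB, rfl⟩ := hfac g
    rw [map_mul]
    exact mul_mem (le_sup_left (a := A.map φ) ⟨a, haA, rfl⟩)
      (le_sup_right (a := A.map φ) ⟨b, hbB, rfl⟩)
  -- images have p-power element orders
  have hppow : ∀ (K : Subgroup G), (∀ x ∈ K, ∀ g ∈ Subgroup.zpowers x, ¬ p ∣ orderOf g → g ∈ N) →
      ∀ x : ↥(K.map φ), ∃ j, orderOf x = p ^ j := by
    intro K hK x
    obtain ⟨a, haK, hax⟩ := x.2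
    obtain ⟨xa, hxz, ya, hyz, haeq, ⟨k, hxk⟩, hyao⟩ := pDecomp19 p hp a
    have hyaN : ya ∈ N := hK a haK ya hyz hyao
    have hφa : φ a = φ xa := by
      rw [haeq, map_mul]
      have : φ ya = 1 := (QuotientGroup.eq_one_iff ya).mpr hyaN
      rw [this, mul_one]
    have hdvd : orderOf (x : G ⧸ N) ∣ p ^ k := by
      rw [← hax, hφa, ← hxk]
      exact orderOf_map_dvd φ xa
    obtain ⟨j, _, hj⟩ := (Nat.dvd_prime_pow hp).mp hdvd
    rw [← Subgroup.orderOf_coe]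
    exact ⟨j, hj⟩
  have hA' : ∀ x ∈ A, ∀ g ∈ Subgroup.zpowers x, ¬ p ∣ orderOf g → g ∈ N :=
    fun x hx g hg ho => hApN (by
      rw [hApdef, mem_pPrimePart19]
      exact ⟨Subgroup.zpowers_le.mpr hx hg, ho⟩)
  have hB' : ∀ x ∈ B, ∀ g ∈ Subgroup.zpowers x, ¬ p ∣ orderOf g → g ∈ N :=
    fun x hx g hg ho => hBpN (by
      rw [hBpdef, mem_pPrimePart19]
      exact ⟨Subgroup.zpowers_le.mpr hx hg, ho⟩)
  have hprime_eq : ∀ (K : Subgroup G), (∀ x : ↥(K.map φ), ∃ j, orderOf x = p ^ j) →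
      ∀ q : ℕ, q.Prime → q ∣ Nat.card ↥(K.map φ) → q = p := by
    intro K hK q hq hdvd
    haveI := Fact.mk hq
    obtain ⟨x, hx⟩ := exists_prime_orderOf_dvd_card' (G := ↥(K.map φ)) q hdvd
    obtain ⟨j, hj⟩ := hK x
    rw [hx] at hj
    have hj0 : j ≠ 0 := by
      intro h
      rw [h, pow_zero] at hj
      exact hq.ne_one hj
    have hpq : p ∣ q := by
      rw [hj]
      exact dvd_pow_self p hj0
    exact ((Nat.prime_dvd_prime_iff_eq hp hq).mp hpq).symm
  have hindex : IsPiNumber {q : ℕ | q ∉ {q : ℕ | q.Prime ∧ q ≠ p}} N.index := by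
    intro q hq hdvd
    have hidx : N.index = Nat.card ↥(A.map φ ⊔ B.map φ) := by
      rw [hsup, Subgroup.index_eq_card]
      exact (Nat.card_congr Subgroup.topEquiv.toEquiv).symm
    have h1 : q ∣ Nat.card ↥(A.map φ) * Nat.card ↥(B.map φ) := by
      rw [hidx] at hdvd
      exact hdvd.trans (card_sup_dvd19 _ _)
    have hqp : q = p := by
      rcases (Nat.Prime.dvd_mul hq).mp h1 with h | h
      · exact hprime_eq A (hppow A hA') q hq h
      · exact hprime_eq B (hppow B hB') q hq h
    subst hqp
    simp
  -- index of N is a prime power matching the Sylow subgroup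
  have hidx0 : N.index ≠ 0 := Subgroup.index_ne_zero_of_finite
  obtain ⟨s, hs⟩ : ∃ s, N.index = p ^ s :=
    ⟨_, Nat.eq_prime_pow_of_unique_prime_dvd hidx0 (fun {d} hd hdl => by
      by_contra hne
      exact (hindex d hd hdl) ⟨hd, hne⟩)⟩
  obtain ⟨P⟩ : Nonempty (Sylow p G) := Sylow.nonempty
  have hG : Nat.card ↥N * N.index = Nat.card G := Subgroup.card_mul_index N
  have hN0 : Nat.card ↥N ≠ 0 := Nat.card_pos.ne'
  have hfac' : (Nat.card G).factorization p = s := by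
    rw [← hG, hs, Nat.factorization_mul hN0 (pow_ne_zero _ hp.pos.ne'), Finsupp.add_apply,
      Nat.factorization_eq_zero_of_not_dvd hNp, hp.factorization_pow, Finsupp.single_eq_same,
      zero_add]
  have hPidx : Nat.card ↥(P : Subgroup G) = N.index := by
    rw [P.card_eq_multiplicity, hfac', hs]
  have h1 : Nat.card ↥N * Nat.card ↥(P : Subgroup G) = Nat.card G := by
    rw [hPidx]; exact hG
  have hcop : Nat.Coprime (Nat.card ↥N) (Nat.card ↥(P : Subgroup G)) := by
    rw [hPidx, hs]
    exact Nat.Coprime.pow_right _ (Nat.coprime_comm.mp ((hp.coprime_iff_not_dvd).mpr hNp))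
  exact ⟨N, hset, hNnormal, ⟨hcardN, hindex⟩,
    P, Subgroup.isComplement'_of_coprime h1 hcop⟩
end
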